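/- Let N be an orchard complete binary L-network with parallel edges h_i and h_e, and let S = s_1...s_k be any complete cherry-reduction sequence for N. Then there exists an index i in [k] such that the partially reduced network N^{s_1...s_{i-1}} contains, as one of its connected components, the network consisting of an unresolved root u with two parallel directed edges to a hybrid node v, where u and v each have one additional directed edge to a distinct leaf (the network N_2 up to leaf labels), and this component contains h_i and h_e. -/

import Mathlib

open scoped Classical

noncomputable section

/-! ## Tags, μ-vectors, cherry types -/

inductive Tag : Type
  | te | hy | rn | ie
deriving DecidableEq, Inhabited

/-- The four cherry types (r2), (r3), (d), (u). -/
inductive CT : Type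
  | r2 | r3 | d | u
deriving DecidableEq, Inhabited

/-- The eight cherry kinds: tree/reticulate combined with the four types. -/
inductive CherryKind : Type
  | Tr2 | Tr3 | Td | Tu | Rr2 | Rr3 | Rd | Ru
deriving DecidableEq, Inhabited

def CherryKind.isTree : CherryKind → Bool
  | .Tr2 | .Tr3 | .Td | .Tu => true
  | _ => false

def CherryKind.ct : CherryKind → CT
  | .Tr2 => .r2 | .Tr3 => .r3 | .Td => .d | .Tu => .u
  | .Rr2 => .r2 | .Rr3 => .r3 | .Rd => .d | .Ru => .u

/-- A simple μ-vector on `n` taxa: coordinate 0 counts paths to hybrid nodes,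
coordinate `i.succ` counts paths to the leaf labelled `i`. -/
abbrev MuVec (n : ℕ) := Fin (n + 1) → ℕ

/-- A μ-entry: a multiset of (one or two) tagged simple μ-vectors. -/
abbrev MuEntry (n : ℕ) := Multiset (MuVec n × Tag)

/-- An edge-based μ-representation: a multiset of μ-entries. -/
abbrev MuRep (n : ℕ) := Multiset (MuEntry n)

/-- Indicator μ-vector `δ_S`. -/
def dlt {n : ℕ} (s : Finset (Fin (n + 1))) : MuVec n := fun i => if i ∈ s then 1 else 0

/-! ## Semidirected multigraphs with labelled leaves -/

/-- A semidirected multigraph on vertex names `ℕ` and edge names `ℕ`;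
`dir e = true` means `e` is directed from `tail e` to `head e`;
`dir e = false` means `e` is an undirected edge with endpoints `tail e`, `head e`.
Leaves may be labelled by taxa in `Fin n`. -/
structure Net (n : ℕ) where
  V : Finset ℕ
  E : Finset ℕ
  tail : ℕ → ℕ
  head : ℕ → ℕ
  dir : ℕ → Bool
  lbl : ℕ → Option (Fin n)

namespace Net

variable {n : ℕ}

def indeg (N : Net n) (v : ℕ) : ℕ :=
  (N.E.filter (fun e => N.dir e = true ∧ N.head e = v)).card
def outdeg (N : Net n) (v : ℕ) : ℕ :=
  (N.E.filter (fun e => N.dir e = true ∧ N.tail e = v)).card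
def undeg (N : Net n) (v : ℕ) : ℕ :=
  (N.E.filter (fun e => N.dir e = false ∧ (N.tail e = v ∨ N.head e = v))).card
def deg (N : Net n) (v : ℕ) : ℕ := N.indeg v + N.outdeg v + N.undeg v

def IsRootNode (N : Net n) (v : ℕ) : Prop := v ∈ N.V ∧ N.indeg v = 0 ∧ N.undeg v = 0
def IsLeafNode (N : Net n) (v : ℕ) : Prop := v ∈ N.V ∧ N.outdeg v = 0 ∧ N.undeg v = 0
def IsHybrid (N : Net n) (v : ℕ) : Prop := 2 ≤ N.indeg v
def IsTreeNode (N : Net n) (v : ℕ) : Prop := N.indeg v ≤ 1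

/-- Source of a step `(e, forward?)` of a semidirected walk. -/
def src (N : Net n) (s : ℕ × Bool) : ℕ := if s.2 then N.tail s.1 else N.head s.1
/-- Destination of a step. -/
def dst (N : Net n) (s : ℕ × Bool) : ℕ := if s.2 then N.head s.1 else N.tail s.1

/-- A step is legal from `u`: the edge is in the graph, directed edges are
traversed forwards, and the step starts at `u`. -/
def stepOK (N : Net n) (u : ℕ) (s : ℕ × Bool) : Prop :=
  s.1 ∈ N.E ∧ (N.dir s.1 = true → s.2 = true) ∧ N.src s = u

/-- `chain N u p x`: `p` is a semidirected walk from `u` to `x`. -/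
def chain (N : Net n) : ℕ → List (ℕ × Bool) → ℕ → Prop
  | u, [], x => u = x
  | u, s :: p, x => N.stepOK u s ∧ N.chain (N.dst s) p x

/-- A semidirected path (walk without repeated vertices) from `u` to `x`. -/
def IsPath (N : Net n) (u x : ℕ) (p : List (ℕ × Bool)) : Prop :=
  u ∈ N.V ∧ N.chain u p x ∧ (u :: p.map N.dst).Nodup

def paths (N : Net n) (u x : ℕ) : Set (List (ℕ × Bool)) := {p | N.IsPath u x p}
def pathsAvoid (N : Net n) (u x : ℕ) (e : ℕ) : Set (List (ℕ × Bool)) :=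
  {p | N.IsPath u x p ∧ e ∉ p.map Prod.fst}

/-- `m N u x` : the number of semidirected paths from `u` to `x`. -/
def m (N : Net n) (u x : ℕ) : ℕ := (N.paths u x).ncard
/-- `mAvoid N u x e` : the number of semidirected paths from `u` to `x` avoiding `e`. -/
def mAvoid (N : Net n) (u x : ℕ) (e : ℕ) : ℕ := (N.pathsAvoid u x e).ncard

/-- One undirected edge joins `u` and `v`. -/
def ustep (N : Net n) (u v : ℕ) : Prop :=
  ∃ e ∈ N.E, N.dir e = false ∧
    ((N.tail e = u ∧ N.head e = v) ∨ (N.tail e = v ∧ N.head e = u))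

/-- `u ~ v`: joined by a path consisting solely of undirected edges. -/
def UndirConn (N : Net n) : ℕ → ℕ → Prop := Relation.ReflTransGen N.ustep

/-- A semidirected cycle. -/
def IsSDCycle (N : Net n) (p : List (ℕ × Bool)) : Prop :=
  ∃ u, p ≠ [] ∧ N.chain u p u ∧ (p.map N.dst).Nodup ∧ (p.map Prod.fst).Nodup

def Acyclic (N : Net n) : Prop := ∀ p, ¬ N.IsSDCycle p

/-- `x` is the leaf labelled `a`. -/
def HasLeaf (N : Net n) (a : Fin n) (x : ℕ) : Prop := x ∈ N.V ∧ N.lbl x = some a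

/-- `N` is an `L`-network: a semidirected acyclic graph whose leaves are tree
nodes, with leaves injectively labelled. -/
structure IsLNetwork (N : Net n) : Prop where
  wfT : ∀ e ∈ N.E, N.tail e ∈ N.V
  wfH : ∀ e ∈ N.E, N.head e ∈ N.V
  acyclic : N.Acyclic
  leavesTree : ∀ v, N.IsLeafNode v → N.IsTreeNode v
  lblV : ∀ v, v ∉ N.V → N.lbl v = none
  lblLeaf : ∀ v ∈ N.V, ((N.lbl v).isSome ↔ N.IsLeafNode v)
  lblInj : ∀ v ∈ N.V, ∀ w ∈ N.V, N.lbl v ≠ none → N.lbl v = N.lbl w → v = w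

/-- Binary: roots of degree 0, 2 or 3; leaves of degree 0 or 1; other nodes of degree 3. -/
def IsBinary (N : Net n) : Prop :=
  ∀ v ∈ N.V,
    (N.IsRootNode v → N.deg v = 0 ∨ N.deg v = 2 ∨ N.deg v = 3) ∧
    (N.IsLeafNode v → N.deg v = 0 ∨ N.deg v = 1) ∧
    (¬ N.IsRootNode v → ¬ N.IsLeafNode v → N.deg v = 3)

/-- The class of `v` under `~` is a singleton. -/
def TrivialClass (N : Net n) (v : ℕ) : Prop := ∀ w, N.UndirConn v w → w = v

/-- Complete: edges incident to leaves are directed (toward the leaves), and every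
nontrivial class under `~` has in-degree 0 in the contraction `N/~`. -/
def IsComplete (N : Net n) : Prop :=
  (∀ e ∈ N.E, N.dir e = false → ¬ N.IsLeafNode (N.tail e) ∧ ¬ N.IsLeafNode (N.head e)) ∧
  (∀ v ∈ N.V, ¬ N.TrivialClass v → ∀ e ∈ N.E, N.dir e = true → ¬ N.UndirConn (N.head e) v)

/-- The class `[v]` is a root of the contraction `N/~`: no directed edge points into it. -/
def IsRootClass (N : Net n) (v : ℕ) : Prop :=
  v ∈ N.V ∧ ∀ e ∈ N.E, N.dir e = true → ¬ N.UndirConn (N.head e) v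

/-- `v` belongs to an unresolved root component. -/
def UnresolvedRC (N : Net n) (v : ℕ) : Prop :=
  N.IsRootClass v ∧ (¬ N.TrivialClass v ∨ N.deg v = 3)

/-- `e` belongs to the admissible edge set of the root component of `v0`. -/
def AdmFor (N : Net n) (v0 e : ℕ) : Prop := e ∈ N.E ∧ N.UndirConn (N.tail e) v0

/-! ## μ-representation of a network -/

def Hybs (N : Net n) : Finset ℕ := N.V.filter (fun v => N.IsHybrid v)

def mToLbl (N : Net n) (v : ℕ) (a : Fin n) : ℕ :=
  ∑ x ∈ N.V.filter (fun x => N.lbl x = some a), N.m v x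
def mToLblAvoid (N : Net n) (v : ℕ) (a : Fin n) (e : ℕ) : ℕ :=
  ∑ x ∈ N.V.filter (fun x => N.lbl x = some a), N.mAvoid v x e

/-- Numbers of paths from `v` to hybrids (coordinate 0) and to each leaf. -/
def muFrom (N : Net n) (v : ℕ) : MuVec n :=
  fun i => Fin.cases (∑ h ∈ N.Hybs, N.m v h) (fun a => N.mToLbl v a) i

/-- Numbers of paths from `v` avoiding edge `e`. -/
def muAt (N : Net n) (e : ℕ) (v : ℕ) : MuVec n :=
  fun i => Fin.cases (∑ h ∈ N.Hybs, N.mAvoid v h e) (fun a => N.mToLblAvoid v a e) i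

/-- The μ-entry of an edge. -/
def muEntryEdge (N : Net n) (e : ℕ) : MuEntry n :=
  if N.dir e = true then
    let t : Tag := if N.IsHybrid (N.head e) then Tag.hy else Tag.te
    if N.UnresolvedRC (N.tail e) then
      ({(N.muAt e (N.head e), t),
        (fun i => N.muFrom (N.tail e) i - N.muAt e (N.tail e) i, Tag.ie)} : MuEntry n)
    else ({(N.muAt e (N.head e), t)} : MuEntry n)
  else
    ({(N.muAt e (N.head e), Tag.te), (N.muAt e (N.tail e), Tag.te)} : MuEntry n)

/-- One μ-entry per root component (indexed by the minimal representative). -/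
def rootEntries (N : Net n) : MuRep n :=
  ((N.V.filter (fun v => N.IsRootClass v ∧ ∀ w ∈ N.V, N.UndirConn v w → v ≤ w)).val).map
    (fun v => ({(N.muFrom v, Tag.rn)} : MuEntry n))

/-- The edge-based μ-representation of `N`. -/
def muRep (N : Net n) : MuRep n :=
  N.E.val.map (fun e => N.muEntryEdge e) + N.rootEntries

end Net

/-! ## Operations on μ-representations -/

variable {n : ℕ}

/-- Multiplicity of a simple μ-vector in a μ-representation: the number of
entries (with multiplicity) containing it. -/
def multVec (μs : MuRep n) (m : MuVec n) : ℕ :=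
  μs.countP (fun ent => ∃ t, (m, t) ∈ ent)

def hasTagged (μs : MuRep n) (mt : MuVec n × Tag) : Prop := ∃ ent ∈ μs, mt ∈ ent

/-- The entry of a simple μ-vector (meaningful when its multiplicity is 1). -/
def entryOf (μs : MuRep n) (m : MuVec n) : MuEntry n :=
  if h : ∃ ent ∈ μs, ∃ t, (m, t) ∈ ent then h.choose else 0

/-- The tag of a simple μ-vector (meaningful when its multiplicity is 1). -/
def tagOf (μs : MuRep n) (m : MuVec n) : Tag :=
  if hasTagged μs (m, Tag.rn) then Tag.rn
  else if hasTagged μs (m, Tag.ie) then Tag.ie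
  else if hasTagged μs (m, Tag.te) then Tag.te
  else Tag.hy

/-- The tagged μ-vectors other than `m` in the entry of `m`. -/
def invParts (μs : MuRep n) (m : MuVec n) : MuEntry n :=
  (entryOf μs m).filter (fun mt => mt.1 ≠ m)

def hasInv (μs : MuRep n) (m : MuVec n) : Prop := invParts μs m ≠ 0

/-- The inverse `m⁻¹` of `m` (meaningful when it exists). -/
def invVec (μs : MuRep n) (m : MuVec n) : MuVec n := ((invParts μs m).toList.headI).1

/-- `(a,b)` is a tree cherry of the μ-representation. -/
def MuTreeCherry (μs : MuRep n) (a b : Fin n) : Prop :=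
  multVec μs (dlt ({a.succ, b.succ} : Finset (Fin (n + 1)))) = 1

/-- Type of a tree cherry of a μ-representation. -/
def muTreeType (μs : MuRep n) (a b : Fin n) : CT :=
  let mab := dlt ({a.succ, b.succ} : Finset (Fin (n + 1)))
  match tagOf μs mab with
  | Tag.rn => CT.r2
  | Tag.ie => CT.r3
  | Tag.te =>
      if (¬ hasInv μs mab) ∨ (∃ mt ∈ invParts μs mab, mt.2 = Tag.ie) then CT.d else CT.u
  | Tag.hy => CT.u

/-- `(a,b)` is a reticulate cherry of the μ-representation. -/
def MuRetCherry (μs : MuRep n) (a b : Fin n) : Prop :=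
  multVec μs (dlt ({0, a.succ} : Finset (Fin (n + 1)))) = 2 ∧
    (multVec μs (dlt ({0, a.succ, b.succ} : Finset (Fin (n + 1)))) = 1 ∨
      (multVec μs (dlt ({0, a.succ, b.succ} : Finset (Fin (n + 1)))) = 2 ∧
        ∀ ent ∈ μs, ∀ t : Tag,
          (dlt ({0, a.succ, b.succ} : Finset (Fin (n + 1))), t) ∈ ent → t = Tag.ie))

/-- Type of a reticulate cherry of a μ-representation. -/
def muRetType (μs : MuRep n) (a b : Fin n) : CT :=
  let mab := dlt ({0, a.succ, b.succ} : Finset (Fin (n + 1)))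
  if multVec μs mab = 2 then CT.r3
  else
    match tagOf μs mab with
    | Tag.rn => CT.r2
    | Tag.ie => CT.r3
    | Tag.te =>
        if (¬ hasInv μs mab) ∨ (∃ mt ∈ invParts μs mab, mt.2 = Tag.ie) then CT.d else CT.u
    | Tag.hy => CT.u

/-- `δ_{0,a,b}⁻¹`, defined as `δ_{0,a}` in the multiplicity-2 (parallel) case. -/
def retInv (μs : MuRep n) (a b : Fin n) : MuVec n :=
  if multVec μs (dlt ({0, a.succ, b.succ} : Finset (Fin (n + 1)))) = 2 then
    dlt ({0, a.succ} : Finset (Fin (n + 1)))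
  else invVec μs (dlt ({0, a.succ, b.succ} : Finset (Fin (n + 1))))

/-- The internal μ-entry of a reticulate cherry `(a,b)` with respect to `μs`. -/
def internalEntry (μs : MuRep n) (a b : Fin n) : MuEntry n :=
  let d0a := dlt ({0, a.succ} : Finset (Fin (n + 1)))
  let d0ab := dlt ({0, a.succ, b.succ} : Finset (Fin (n + 1)))
  if multVec μs d0ab = 1 ∧
      ((¬ hasInv μs d0ab) ∨ (∃ mt ∈ invParts μs d0ab, mt.2 = Tag.ie)) then
    ({(d0a, Tag.hy)} : MuEntry n)
  else
    ({(d0a, Tag.hy), (fun i => d0ab i + retInv μs a b i - d0a i, Tag.ie)} : MuEntry n)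

/-- Remove the whole entry of `m`. -/
def removeEntryOf (μs : MuRep n) (m : MuVec n) : MuRep n := μs.erase (entryOf μs m)

/-- Remove `m⁻¹` from the entry of `m` (keeping `m`). -/
def removeInvOf (μs : MuRep n) (m : MuVec n) : MuRep n :=
  (μs.erase (entryOf μs m)) + {(entryOf μs m).filter (fun mt => mt.1 = m)}

/-- Remove `m` from its entry (keeping the rest of the entry). -/
def removeVecOf (μs : MuRep n) (m : MuVec n) : MuRep n :=
  (μs.erase (entryOf μs m)) + {(entryOf μs m).filter (fun mt => mt.1 ≠ m)}

def entryOfT (μs : MuRep n) (mt : MuVec n × Tag) : MuEntry n :=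
  if h : ∃ ent ∈ μs, mt ∈ ent then h.choose else 0

/-- Remove one occurrence of the tagged μ-vector `mt` from some entry containing it. -/
def removeTaggedOnce (μs : MuRep n) (mt : MuVec n × Tag) : MuRep n :=
  (μs.erase (entryOfT μs mt)) + {(entryOfT μs mt).erase mt}

/-- Change the tag of `m⁻¹` (within the entry of `m`) to `ie`. -/
def retagInvIe (μs : MuRep n) (m : MuVec n) : MuRep n :=
  let ent := entryOf μs m
  (μs.erase ent) +
    {ent.filter (fun mt => mt.1 = m) + (invParts μs m).map (fun mt => (mt.1, Tag.ie))}

/-- Change the tag of one occurrence of the tagged μ-vector `mt` to `t'`. -/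
def retagTaggedTo (μs : MuRep n) (mt : MuVec n × Tag) (t' : Tag) : MuRep n :=
  let ent := entryOfT μs mt
  (μs.erase ent) + {(ent.erase mt) + ({(mt.1, t')} : MuEntry n)}

/-- Apply `f` to every simple μ-vector of every entry. -/
def mapVecs (f : MuVec n → MuVec n) (μs : MuRep n) : MuRep n :=
  μs.map (fun ent => ent.map (fun mt => (f mt.1, mt.2)))

/-- `(m_0, m_a, m_b, …) ↦ (m_0, 0, m_b, …)`. -/
def zeroCoordA (a : Fin n) (m : MuVec n) : MuVec n :=
  fun i => if i = a.succ then 0 else m i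

/-- `(m_0, m_a, m_b, …) ↦ (m_0 − m_a, m_a − m_b, m_b, …)`. -/
def retAdj (a b : Fin n) (m : MuVec n) : MuVec n :=
  fun i => if i = 0 then m 0 - m a.succ else if i = a.succ then m a.succ - m b.succ else m i

/-- Reduction of a tree cherry `(a,b)` on a μ-representation. -/
def muReduceTree (μs : MuRep n) (a b : Fin n) : MuRep n :=
  let dab := dlt ({a.succ, b.succ} : Finset (Fin (n + 1)))
  let da := dlt ({a.succ} : Finset (Fin (n + 1)))
  let db := dlt ({b.succ} : Finset (Fin (n + 1)))
  let μ1 :=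
    match muTreeType μs a b with
    | CT.r2 => removeEntryOf μs db
    | CT.d => removeEntryOf μs db
    | CT.r3 => removeVecOf (removeInvOf μs db) dab
    | CT.u => retagInvIe (removeEntryOf μs db) dab
  let μ2 := removeEntryOf μ1 da
  mapVecs (zeroCoordA a) μ2

/-- Reduction of a reticulate cherry `(a,b)` on a μ-representation. -/
def muReduceRet (μs : MuRep n) (a b : Fin n) : MuRep n :=
  let d0a := dlt ({0, a.succ} : Finset (Fin (n + 1)))
  let d0ab := dlt ({0, a.succ, b.succ} : Finset (Fin (n + 1)))
  let da := dlt ({a.succ} : Finset (Fin (n + 1)))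
  let db := dlt ({b.succ} : Finset (Fin (n + 1)))
  let intEnt := internalEntry μs a b
  let μ1 :=
    match muRetType μs a b with
    | CT.r2 => removeEntryOf μs db
    | CT.d => removeEntryOf μs db
    | CT.r3 => removeTaggedOnce (removeInvOf μs db) (d0ab, Tag.ie)
    | CT.u => retagInvIe (removeEntryOf μs db) d0ab
  let μ2 := removeEntryOf μ1 da
  let μ3 := μ2.erase intEnt
  let μ4 := retagTaggedTo μ3 (d0a, Tag.hy) Tag.te
  mapVecs (retAdj a b) μ4

/-- Reduction of a cherry `(a,b)` on a μ-representation. -/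
def muReduceCherry (μs : MuRep n) (a b : Fin n) : MuRep n :=
  if MuTreeCherry μs a b then muReduceTree μs a b
  else if MuRetCherry μs a b then muReduceRet μs a b
  else μs

/-! ## Cherries and reductions on networks -/

namespace Net

/-- The node labelled `a` (meaningful when it exists). -/
def labelNode (N : Net n) (a : Fin n) : ℕ :=
  ((N.V.filter (fun x => N.lbl x = some a)).sort (· ≤ ·)).headI

def inEdges (N : Net n) (x : ℕ) : Finset ℕ :=
  N.E.filter (fun e => N.dir e = true ∧ N.head e = x)

/-- The parent of `x` (meaningful when `x` has in-degree 1). -/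
def parentOf (N : Net n) (x : ℕ) : ℕ :=
  N.tail (((N.inEdges x).sort (· ≤ ·)).headI)

def IsParentOf (N : Net n) (p x : ℕ) : Prop :=
  ∃ e ∈ N.E, N.dir e = true ∧ N.tail e = p ∧ N.head e = x

/-- `(a,b)` is a tree cherry of `N`. -/
def TreeCherry (N : Net n) (a b : Fin n) : Prop :=
  ∃ x y p, N.HasLeaf a x ∧ N.HasLeaf b y ∧ x ≠ y ∧ N.IsParentOf p x ∧ N.IsParentOf p y

/-- `(a,b)` is a reticulate cherry of `N`. -/
def RetCherry (N : Net n) (a b : Fin n) : Prop :=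
  ∃ x y pa pb, N.HasLeaf a x ∧ N.HasLeaf b y ∧ x ≠ y ∧
    N.IsParentOf pa x ∧ N.IsHybrid pa ∧ N.IsParentOf pb y ∧ N.IsParentOf pb pa

def IsCherry (N : Net n) (a b : Fin n) : Prop := N.TreeCherry a b ∨ N.RetCherry a b

/-- The type of a cherry `(a,b)`, read off from the parent of `b`. -/
def cherryType (N : Net n) (a b : Fin n) : CT :=
  let pb := N.parentOf (N.labelNode b)
  if N.IsRootNode pb ∧ N.deg pb = 2 then CT.r2
  else if N.IsRootNode pb ∧ N.deg pb = 3 then CT.r3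
  else if 0 < N.undeg pb then CT.u
  else CT.d

def incE (N : Net n) (v : ℕ) : Finset ℕ :=
  N.E.filter (fun e => N.tail e = v ∨ N.head e = v)

/-- A node is suppressible (Def. of node suppression). -/
def Suppressible (N : Net n) (v : ℕ) : Prop :=
  N.lbl v = none ∧
    ((N.deg v = 2 ∧ ¬ N.IsRootNode v) ∨
      (N.deg v = 1 ∧ N.IsRootNode v ∧ ∀ e ∈ N.incE v, ¬ N.IsHybrid (N.head e)))

/-- Replace the two edges `e1`, `e2` at `v` by the single edge (named `e1`)
from `p` to `c`, directed iff `d`. -/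
def replaceEdge (N : Net n) (v e1 e2 p c : ℕ) (d : Bool) : Net n :=
  { V := N.V.erase v
    E := N.E.erase e2
    tail := Function.update N.tail e1 p
    head := Function.update N.head e1 c
    dir := Function.update N.dir e1 d
    lbl := N.lbl }

/-- Suppress a (suppressible) node of degree 1 or 2. -/
def suppress (N : Net n) (v : ℕ) : Net n :=
  match (N.incE v).sort (· ≤ ·) with
  | [e] => { N with V := N.V.erase v, E := N.E.erase e }
  | [e1, e2] =>
      let o1 := if N.tail e1 = v then N.head e1 else N.tail e1
      let o2 := if N.tail e2 = v then N.head e2 else N.tail e2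
      if N.dir e1 = true ∧ N.tail e1 = v then N.replaceEdge v e1 e2 o2 o1 true
      else if N.dir e2 = true ∧ N.tail e2 = v then N.replaceEdge v e1 e2 o1 o2 true
      else if N.dir e1 = true then N.replaceEdge v e1 e2 o1 o2 true
      else if N.dir e2 = true then N.replaceEdge v e1 e2 o2 o1 true
      else N.replaceEdge v e1 e2 o1 o2 false
  | _ => N

def suppressIf (N : Net n) (v : ℕ) : Net n := if N.Suppressible v then N.suppress v else N

/-- Delete the leaf `x` and its incident edge(s). -/
def deleteLeaf (N : Net n) (x : ℕ) : Net n :=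
  { V := N.V.erase x
    E := N.E \ N.incE x
    tail := N.tail
    head := N.head
    dir := N.dir
    lbl := Function.update N.lbl x none }

/-- Reduction of a tree cherry `(a,b)`. -/
def reduceTree (N : Net n) (a b : Fin n) : Net n :=
  let x := N.labelNode a
  let p := N.parentOf x
  (N.deleteLeaf x).suppressIf p

/-- Reduction of a reticulate cherry `(a,b)`: delete the internal hybrid edge,
suppress `p_b` if suppressible, then suppress `p_a`. -/
def reduceRet (N : Net n) (a b : Fin n) : Net n :=
  let x := N.labelNode a
  let y := N.labelNode b
  let pa := N.parentOf x
  let pb := N.parentOf y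
  let eint :=
    ((N.E.filter (fun e => N.dir e = true ∧ N.tail e = pb ∧ N.head e = pa)).sort (· ≤ ·)).headI
  let N1 : Net n := { N with E := N.E.erase eint }
  ((N1.suppressIf pb).suppress pa)

/-- Reduction of the cherry `(a,b)` in `N`, written `N^{(a,b)}`. -/
def reduceCherry (N : Net n) (a b : Fin n) : Net n :=
  if N.TreeCherry a b then N.reduceTree a b
  else if N.RetCherry a b then N.reduceRet a b
  else N

def reduceSeq (N : Net n) (S : List (Fin n × Fin n)) : Net n :=
  S.foldl (fun M s => M.reduceCherry s.1 s.2) N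

def IsRedSeq : Net n → List (Fin n × Fin n) → Prop
  | _, [] => True
  | N, s :: S => N.IsCherry s.1 s.2 ∧ IsRedSeq (N.reduceCherry s.1 s.2) S

/-- `N` is the trivial forest on `L0`: isolated nodes labelled bijectively by `L0`. -/
def IsTrivialForest (N : Net n) (L0 : Finset (Fin n)) : Prop :=
  N.E = ∅ ∧ (∀ v ∈ N.V, ∃ a ∈ L0, N.lbl v = some a) ∧
    (∀ a ∈ L0, ∃ v ∈ N.V, N.lbl v = some a)

/-- `N` is orchard: some cherry reduction sequence reduces it to a trivial forest. -/
def Orchard (N : Net n) : Prop :=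
  ∃ S L0, N.IsRedSeq S ∧ (N.reduceSeq S).IsTrivialForest L0

def freshV (N : Net n) : ℕ := N.V.sup id + 1
def freshE (N : Net n) : ℕ := N.E.sup id + 1

/-- Addition of the cherry `(a,b)` of kind `k` to `N` (identity if conditions fail). -/
def addCherry (N : Net n) (a b : Fin n) (k : CherryKind) : Net n :=
  let y := N.labelNode b
  let w := N.parentOf y
  let ewb := ((N.inEdges y).sort (· ≤ ·)).headI
  let va := N.freshV
  let vpb := N.freshV + 1
  let e1 := N.freshE
  let e2 := N.freshE + 1
  let x := N.labelNode a
  let pa := N.parentOf x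
  let isolated : Prop := y ∈ N.V ∧ N.deg y = 0 ∧ (N.lbl y).isSome
  let nonIsolated : Prop := y ∈ N.V ∧ N.deg y ≠ 0 ∧ (N.lbl y).isSome
  let resolvedRoot : Prop := N.IsRootNode w ∧ N.deg w = 2
  let aLeaf : Prop := ∃ xx, N.HasLeaf a xx
  match k with
  | CherryKind.Tr2 =>
      if isolated then
        { V := insert vpb (insert va N.V)
          E := insert e2 (insert e1 N.E)
          tail := Function.update (Function.update N.tail e1 vpb) e2 vpb
          head := Function.update (Function.update N.head e1 va) e2 y
          dir := Function.update (Function.update N.dir e1 true) e2 true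
          lbl := Function.update N.lbl va (some a) }
      else N
  | CherryKind.Tr3 =>
      if nonIsolated ∧ resolvedRoot then
        { V := insert va N.V
          E := insert e1 N.E
          tail := Function.update N.tail e1 w
          head := Function.update N.head e1 va
          dir := Function.update N.dir e1 true
          lbl := Function.update N.lbl va (some a) }
      else N
  | CherryKind.Td =>
      if nonIsolated ∧ ¬ resolvedRoot then
        { V := insert vpb (insert va N.V)
          E := insert e2 (insert e1 N.E)
          tail := Function.update (Function.update N.tail e1 vpb) e2 vpb
          head :=
            Function.update (Function.update (Function.update N.head ewb vpb) e1 va) e2 y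
          dir := Function.update (Function.update N.dir e1 true) e2 true
          lbl := Function.update N.lbl va (some a) }
      else N
  | CherryKind.Tu =>
      if nonIsolated ∧ ¬ resolvedRoot then
        { V := insert vpb (insert va N.V)
          E := insert e2 (insert e1 N.E)
          tail := Function.update (Function.update N.tail e1 vpb) e2 vpb
          head :=
            Function.update (Function.update (Function.update N.head ewb vpb) e1 va) e2 y
          dir :=
            Function.update (Function.update (Function.update N.dir ewb false) e1 true) e2 true
          lbl := Function.update N.lbl va (some a) }
      else N
  | CherryKind.Rr2 =>
      if aLeaf ∧ isolated then
        { V := insert vpb N.V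
          E := insert e2 (insert e1 N.E)
          tail := Function.update (Function.update N.tail e1 vpb) e2 vpb
          head := Function.update (Function.update N.head e1 pa) e2 y
          dir := Function.update (Function.update N.dir e1 true) e2 true
          lbl := N.lbl }
      else N
  | CherryKind.Rr3 =>
      if aLeaf ∧ nonIsolated ∧ resolvedRoot then
        { V := N.V
          E := insert e1 N.E
          tail := Function.update N.tail e1 w
          head := Function.update N.head e1 pa
          dir := Function.update N.dir e1 true
          lbl := N.lbl }
      else N
  | CherryKind.Rd =>
      if aLeaf ∧ nonIsolated ∧ ¬ resolvedRoot then
        { V := insert vpb N.V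
          E := insert e2 (insert e1 N.E)
          tail := Function.update (Function.update N.tail e1 vpb) e2 vpb
          head :=
            Function.update (Function.update (Function.update N.head ewb vpb) e1 pa) e2 y
          dir := Function.update (Function.update N.dir e1 true) e2 true
          lbl := N.lbl }
      else N
  | CherryKind.Ru =>
      if aLeaf ∧ nonIsolated ∧ ¬ resolvedRoot then
        { V := insert vpb N.V
          E := insert e2 (insert e1 N.E)
          tail := Function.update (Function.update N.tail e1 vpb) e2 vpb
          head :=
            Function.update (Function.update (Function.update N.head ewb vpb) e1 pa) e2 y
          dir :=
            Function.update (Function.update (Function.update N.dir ewb false) e1 true) e2 true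
          lbl := N.lbl }
      else N

/-- Isomorphism of leaf-labelled semidirected networks. -/
def Isom (N M : Net n) : Prop :=
  ∃ f g : ℕ → ℕ,
    Set.InjOn f ↑N.V ∧ N.V.image f = M.V ∧
    Set.InjOn g ↑N.E ∧ N.E.image g = M.E ∧
    (∀ e ∈ N.E, M.dir (g e) = N.dir e) ∧
    (∀ e ∈ N.E, N.dir e = true →
      M.tail (g e) = f (N.tail e) ∧ M.head (g e) = f (N.head e)) ∧
    (∀ e ∈ N.E, N.dir e = false →
      (M.tail (g e) = f (N.tail e) ∧ M.head (g e) = f (N.head e)) ∨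
        (M.tail (g e) = f (N.head e) ∧ M.head (g e) = f (N.tail e))) ∧
    (∀ v ∈ N.V, M.lbl (f v) = N.lbl v)

/-- `N` is a (complete binary) `L`-network. -/
def Good (N : Net n) : Prop := N.IsLNetwork ∧ N.IsBinary ∧ N.IsComplete

/-- The edge-based μ-dissimilarity: size of the symmetric difference of the
multisets of μ-entries. -/
def dmu (N M : Net n) : ℕ := ((N.muRep - M.muRep) + (M.muRep - N.muRep)).card

/-- `(a,b)` is a reticulate cherry of `N` whose internal and external hybrid
edges are parallel. -/
def ParallelRet (N : Net n) (a b : Fin n) : Prop :=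
  ∃ x y pa pb hi he, N.HasLeaf a x ∧ N.HasLeaf b y ∧
    N.IsParentOf pa x ∧ N.IsHybrid pa ∧ N.IsParentOf pb y ∧
    hi ≠ he ∧ hi ∈ N.E ∧ he ∈ N.E ∧ N.dir hi = true ∧ N.dir he = true ∧
    N.tail hi = pb ∧ N.head hi = pa ∧ N.tail he = pb ∧ N.head he = pa

end Net

/-!
Write `hi, he : u → v`. As long as no reticulate cherry has its hybrid parent at `v`, every
reduction keeps `hi` and `he` as parallel edges `u → v`, with `u` having at most three edges and
`v` exactly one further edge, which leaves `v` (`Net.ParallelPair`). Indeed these degree bounds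
keep the parents of any other cherry away from `u` and `v`, so its reduction only deletes a leaf
or an edge and suppresses nodes outside `{u, v}`; suppressing the child of `v` just replaces the
outgoing edge of `v`. The final trivial forest has no edges, so at some step a reticulate cherry
`(a, b)` has hybrid parent `v`. The edge from the other parent into `v` is then `hi` or `he`, so
that parent is `u`, and `u`, `v` with the leaves `a`, `b` form a component `N_2`.
-/

namespace Net

variable {n : ℕ}

lemma mem_incE {M : Net n} {w e : ℕ} :
    e ∈ M.incE w ↔ e ∈ M.E ∧ (M.tail e = w ∨ M.head e = w) :=
  Finset.mem_filter

lemma incE_subset (M : Net n) (w : ℕ) : M.incE w ⊆ M.E := Finset.filter_subset _ _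

lemma incE_eq_union (M : Net n) (w : ℕ) :
    M.incE w = M.E.filter (fun e => M.dir e = true ∧ M.head e = w) ∪
      M.E.filter (fun e => M.dir e = true ∧ M.tail e = w) ∪
      M.E.filter (fun e => M.dir e = false ∧ (M.tail e = w ∨ M.head e = w)) := by
  ext e
  simp only [mem_incE, Finset.mem_union, Finset.mem_filter]
  cases M.dir e <;>
    simp only [Bool.false_eq_true, Bool.true_eq_false, true_and, false_and, and_false, or_self,
      or_false, false_or]
  tauto

lemma card_incE_eq_deg {M : Net n} (noloop : ∀ e ∈ M.E, M.tail e ≠ M.head e) (w : ℕ) :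
    (M.incE w).card = M.deg w := by
  rw [incE_eq_union, Finset.card_union_of_disjoint, Finset.card_union_of_disjoint]
  · rfl
  · exact Finset.disjoint_filter.mpr fun e he h1 h2 => noloop e he (h2.2.trans h1.2.symm)
  · refine Finset.disjoint_left.mpr fun e h1 h2 => ?_
    simp only [Finset.mem_union, Finset.mem_filter] at h1 h2
    rcases h1 with h1 | h1 <;> simp [h1.2.1] at h2

lemma eq_or_eq_iff_of_pair_eq {k d a b : ℕ} (h : ({k, d} : Finset ℕ) = {a, b}) (e : ℕ) :
    e = k ∨ e = d ↔ e = a ∨ e = b := by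
  simpa using congrArg (e ∈ ·) h

lemma headI_sort_mem {s : Finset ℕ} (hs : s.Nonempty) : (s.sort (· ≤ ·)).headI ∈ s := by
  rw [← Finset.mem_sort (· ≤ ·)]
  cases h : s.sort (· ≤ ·) with
  | nil =>
    obtain ⟨a, ha⟩ := hs
    rw [← Finset.mem_sort (· ≤ ·), h] at ha
    simp at ha
  | cons a l => simp

lemma isRootNode_of_forall_out {M : Net n} (noloop : ∀ e ∈ M.E, M.tail e ≠ M.head e)
    {p : ℕ} (hp : p ∈ M.V) (hout : ∀ e ∈ M.incE p, M.dir e = true ∧ M.tail e = p) :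
    M.IsRootNode p := by
  refine ⟨hp, Finset.card_eq_zero.mpr ?_, Finset.card_eq_zero.mpr ?_⟩
  · refine Finset.filter_eq_empty_iff.mpr fun e he h => ?_
    exact noloop e he ((hout e (mem_incE.mpr ⟨he, Or.inr h.2⟩)).2.trans h.2.symm)
  · refine Finset.filter_eq_empty_iff.mpr fun e he h => ?_
    simp [(hout e (mem_incE.mpr ⟨he, h.2⟩)).1] at h

lemma not_suppressible_of_out_edges {M : Net n} (noloop : ∀ e ∈ M.E, M.tail e ≠ M.head e)
    {p e f : ℕ} (hp : p ∈ M.V) (hef : e ≠ f) (he : e ∈ M.E) (hde : M.dir e = true)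
    (hte : M.tail e = p) (hf : f ∈ M.E) (hdf : M.dir f = true) (htf : M.tail f = p) :
    ¬ M.Suppressible p := by
  have he' : e ∈ M.incE p := mem_incE.mpr ⟨he, Or.inl hte⟩
  have hf' : f ∈ M.incE p := mem_incE.mpr ⟨hf, Or.inl htf⟩
  have hcard : 2 ≤ M.deg p := by
    rw [← card_incE_eq_deg noloop]
    exact Finset.one_lt_card.mpr ⟨e, he', f, hf', hef⟩
  rintro ⟨-, ⟨hdeg, hroot⟩ | ⟨hdeg, -⟩⟩
  · have hinc : M.incE p = {e, f} :=
      (Finset.eq_of_subset_of_card_le (Finset.insert_subset he' (by simpa using hf'))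
        (by rw [card_incE_eq_deg noloop, hdeg, Finset.card_pair hef])).symm
    refine hroot (isRootNode_of_forall_out noloop hp fun g hg => ?_)
    rw [hinc, Finset.mem_insert, Finset.mem_singleton] at hg
    rcases hg with rfl | rfl
    exacts [⟨hde, hte⟩, ⟨hdf, htf⟩]
  · omega

lemma IsHybrid.exists_inEdge_ne {M : Net n} {p : ℕ} (h : M.IsHybrid p) (g : ℕ) :
    ∃ e ∈ M.E, M.dir e = true ∧ M.head e = p ∧ e ≠ g := by
  obtain ⟨e, he, hne⟩ := Finset.exists_mem_ne (lt_of_lt_of_le one_lt_two h) g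
  obtain ⟨he, hd, hh⟩ := Finset.mem_filter.mp he
  exact ⟨e, he, hd, hh, hne⟩

section replaceEdge

variable (M : Net n) {p k d q z : ℕ} (b : Bool)

lemma replaceEdge_of_ne {e : ℕ} (hk : e ≠ k) :
    (M.replaceEdge p k d q z b).dir e = M.dir e ∧
      (M.replaceEdge p k d q z b).tail e = M.tail e ∧
      (M.replaceEdge p k d q z b).head e = M.head e := by
  simp [replaceEdge, Function.update_of_ne hk]

lemma replaceEdge_self :
    (M.replaceEdge p k d q z b).dir k = b ∧ (M.replaceEdge p k d q z b).tail k = q ∧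
      (M.replaceEdge p k d q z b).head k = z := by
  simp [replaceEdge]

lemma mem_incE_replaceEdge (hk : k ∈ M.E) (hkd : k ≠ d) {w e : ℕ} :
    e ∈ (M.replaceEdge p k d q z b).incE w ↔
      (e = k ∧ (q = w ∨ z = w)) ∨ (e ∈ M.incE w ∧ e ≠ k ∧ e ≠ d) := by
  by_cases hek : e = k
  · subst hek
    simp [mem_incE, replaceEdge, hk, hkd]
  · simp only [mem_incE, replaceEdge, Finset.mem_erase, Function.update_of_ne hek]
    tauto

end replaceEdge

lemma suppress_eq_eraseNodeEdge {M : Net n} {p e : ℕ} (hp : M.incE p = {e}) :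
    M.suppress p = { M with V := M.V.erase p, E := M.E.erase e } := by
  rw [suppress, hp, Finset.sort_singleton]

lemma suppress_eq_self {M : Net n} {p : ℕ} (hp : 3 ≤ (M.incE p).card) : M.suppress p = M := by
  rw [← Finset.length_sort (· ≤ ·)] at hp
  unfold suppress
  match (M.incE p).sort (· ≤ ·), hp with
  | _ :: _ :: _ :: _, _ => rfl

lemma suppress_of_notMem_incE (M : Net n) {p e : ℕ} (he : e ∈ M.E) (hp : e ∉ M.incE p) :
    e ∈ (M.suppress p).E ∧ (M.suppress p).dir e = M.dir e ∧
      (M.suppress p).tail e = M.tail e ∧ (M.suppress p).head e = M.head e := by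
  have hne : ∀ g ∈ (M.incE p).sort (· ≤ ·), e ≠ g := fun g hg h =>
    hp (h ▸ (Finset.mem_sort _).mp hg)
  unfold suppress
  split
  · next g hg => exact ⟨Finset.mem_erase.mpr ⟨hne g (by simp [hg]), he⟩, rfl, rfl, rfl⟩
  · next g₁ g₂ hg =>
    have h₁ := hne g₁ (by simp [hg])
    have h₂ := hne g₂ (by simp [hg])
    split_ifs <;>
      exact ⟨Finset.mem_erase.mpr ⟨h₂, he⟩, M.replaceEdge_of_ne _ h₁⟩
  · exact ⟨he, rfl, rfl, rfl⟩

lemma lbl_suppress (M : Net n) (p : ℕ) : (M.suppress p).lbl = M.lbl := by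
  unfold suppress
  split
  · rfl
  · split_ifs <;> rfl
  · rfl

lemma suppressIf_of_notMem_incE (M : Net n) {p e : ℕ} (he : e ∈ M.E) (hp : e ∉ M.incE p) :
    e ∈ (M.suppressIf p).E ∧ (M.suppressIf p).dir e = M.dir e ∧
      (M.suppressIf p).tail e = M.tail e ∧ (M.suppressIf p).head e = M.head e := by
  unfold suppressIf
  split_ifs
  exacts [M.suppress_of_notMem_incE he hp, ⟨he, rfl, rfl, rfl⟩]

lemma lbl_suppressIf (M : Net n) (p : ℕ) : (M.suppressIf p).lbl = M.lbl := by
  unfold suppressIf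
  split_ifs
  exacts [M.lbl_suppress p, rfl]

/-- The part of being an `L`-network that cherry reductions preserve. -/
structure WellFormed (M : Net n) : Prop where
  tail_ne_head : ∀ e ∈ M.E, M.tail e ≠ M.head e
  tail_mem : ∀ e ∈ M.E, M.tail e ∈ M.V
  head_mem : ∀ e ∈ M.E, M.head e ∈ M.V
  leaf : ∀ z, (M.lbl z).isSome → ∀ e ∈ M.incE z,
    M.incE z = {e} ∧ M.dir e = true ∧ M.head e = z
  lbl_inj : ∀ z ∈ M.V, ∀ w ∈ M.V, M.lbl z ≠ none → M.lbl z = M.lbl w → z = w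

namespace WellFormed

variable {M : Net n}

lemma lbl_eq_none (W : M.WellFormed) {w e : ℕ} (he : e ∈ M.incE w)
    (hin : ¬(M.dir e = true ∧ M.head e = w)) : M.lbl w = none :=
  Option.not_isSome_iff_eq_none.mp fun h => hin (W.leaf w h e he).2

lemma lbl_tail_eq_none (W : M.WellFormed) {e : ℕ} (he : e ∈ M.E) : M.lbl (M.tail e) = none :=
  W.lbl_eq_none (mem_incE.mpr ⟨he, Or.inl rfl⟩) fun h => W.tail_ne_head e he h.2.symm

lemma incE_eq_singleton (W : M.WellFormed) {z e : ℕ} (hz : (M.lbl z).isSome) (he : e ∈ M.E)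
    (hh : M.head e = z) : M.incE z = {e} :=
  (W.leaf z hz e (mem_incE.mpr ⟨he, Or.inr hh⟩)).1

lemma labelNode_eq (W : M.WellFormed) {a : Fin n} {z : ℕ} (hz : M.HasLeaf a z) :
    M.labelNode a = z := by
  have hfilter : M.V.filter (fun x => M.lbl x = some a) = {z} := by
    ext x
    simp only [Finset.mem_filter, Finset.mem_singleton]
    refine ⟨fun ⟨hx, hxa⟩ =>
      W.lbl_inj x hx z hz.1 (by simp [hxa]) (hxa.trans hz.2.symm), ?_⟩
    rintro rfl
    exact hz
  rw [labelNode, hfilter, Finset.sort_singleton]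
  rfl

lemma parentOf_eq (W : M.WellFormed) {z e : ℕ} (hz : (M.lbl z).isSome) (he : e ∈ M.E)
    (hd : M.dir e = true) (hh : M.head e = z) : M.parentOf z = M.tail e := by
  have hin : M.inEdges z = {e} := by
    refine Finset.eq_singleton_iff_unique_mem.mpr ⟨Finset.mem_filter.mpr ⟨he, hd, hh⟩, ?_⟩
    intro f hf
    have hf' : f ∈ M.incE z := mem_incE.mpr ⟨(Finset.mem_filter.mp hf).1,
      Or.inr (Finset.mem_filter.mp hf).2.2⟩
    simpa [W.incE_eq_singleton hz he hh] using hf'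
  rw [parentOf, hin, Finset.sort_singleton]
  rfl

end WellFormed

structure IsSubnet (M' M : Net n) : Prop where
  V_subset : M'.V ⊆ M.V
  E_subset : M'.E ⊆ M.E
  tail_eq : M'.tail = M.tail
  head_eq : M'.head = M.head
  dir_eq : M'.dir = M.dir
  lbl_eq : ∀ z, M'.lbl z = none ∨ M'.lbl z = M.lbl z

namespace IsSubnet

variable {M M' : Net n}

lemma mem_incE (h : M'.IsSubnet M) {w e : ℕ} :
    e ∈ M'.incE w ↔ e ∈ M'.E ∧ e ∈ M.incE w := by
  simp only [Net.mem_incE, h.tail_eq, h.head_eq]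
  exact ⟨fun ⟨he, hw⟩ => ⟨he, h.E_subset he, hw⟩, fun ⟨he, _, hw⟩ => ⟨he, hw⟩⟩

lemma incE_subset (h : M'.IsSubnet M) (w : ℕ) : M'.incE w ⊆ M.incE w :=
  fun _ he => (h.mem_incE.mp he).2

lemma lbl_of_isSome (h : M'.IsSubnet M) {z : ℕ} (hz : (M'.lbl z).isSome) : M'.lbl z = M.lbl z :=
  (h.lbl_eq z).resolve_left (Option.isSome_iff_ne_none.mp hz)

lemma wellFormed (h : M'.IsSubnet M) (W : M.WellFormed)
    (hends : ∀ e ∈ M'.E, M'.tail e ∈ M'.V ∧ M'.head e ∈ M'.V) : M'.WellFormed where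
  tail_ne_head e he := by rw [h.tail_eq, h.head_eq]; exact W.tail_ne_head e (h.E_subset he)
  tail_mem e he := (hends e he).1
  head_mem e he := (hends e he).2
  leaf z hz e he := by
    have hz' : (M.lbl z).isSome := h.lbl_of_isSome hz ▸ hz
    obtain ⟨hinc, hd, hh⟩ := W.leaf z hz' e (h.incE_subset z he)
    refine ⟨Finset.Subset.antisymm (hinc ▸ h.incE_subset z) (by simpa using he), ?_, ?_⟩
    · rw [h.dir_eq]; exact hd
    · rw [h.head_eq]; exact hh
  lbl_inj z hz w hw hne heq := by
    have hz' := h.lbl_of_isSome (Option.ne_none_iff_isSome.mp hne)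
    have hw' := h.lbl_of_isSome (Option.ne_none_iff_isSome.mp (heq ▸ hne))
    exact W.lbl_inj z (h.V_subset hz) w (h.V_subset hw) (hz' ▸ hne) (hz' ▸ hw' ▸ heq)

end IsSubnet

lemma isSubnet_deleteLeaf (M : Net n) (x : ℕ) : (M.deleteLeaf x).IsSubnet M where
  V_subset := Finset.erase_subset _ _
  E_subset := Finset.sdiff_subset
  tail_eq := rfl
  head_eq := rfl
  dir_eq := rfl
  lbl_eq z := by
    by_cases hz : z = x
    · exact Or.inl (by simp [deleteLeaf, hz])
    · exact Or.inr (Function.update_of_ne hz _ _)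

lemma isSubnet_eraseEdge (M : Net n) (e : ℕ) : ({ M with E := M.E.erase e } : Net n).IsSubnet M :=
  ⟨subset_rfl, Finset.erase_subset _ _, rfl, rfl, rfl, fun _ => Or.inr rfl⟩

lemma isSubnet_eraseNodeEdge (M : Net n) (p e : ℕ) :
    ({ M with V := M.V.erase p, E := M.E.erase e } : Net n).IsSubnet M :=
  ⟨Finset.erase_subset _ _, Finset.erase_subset _ _, rfl, rfl, rfl, fun _ => Or.inr rfl⟩

section

variable {M : Net n}

lemma Acyclic.tail_ne_head (hac : M.Acyclic) : ∀ e ∈ M.E, M.tail e ≠ M.head e := by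
  intro e he h
  refine hac [(e, true)]
    ⟨M.tail e, by simp, ⟨⟨he, fun _ => rfl, by simp [src]⟩, ?_⟩, by simp, by simp⟩
  simp [chain, dst, h]

lemma Acyclic.dir_eq_true_of_parallel (hac : M.Acyclic) {e f : ℕ} (hef : e ≠ f) (he : e ∈ M.E)
    (hf : f ∈ M.E) (ht : M.tail e = M.tail f) (hh : M.head e = M.head f) : M.dir f = true := by
  by_contra hd
  refine hac [(e, true), (f, false)] ⟨M.tail e, by simp, ?_, ?_, by simp [hef]⟩
  · refine ⟨⟨he, fun _ => rfl, by simp [src]⟩, ⟨hf, fun h => absurd h hd, ?_⟩, ?_⟩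
    · simp [src, dst, hh]
    · simp [chain, dst, ht]
  · simpa [dst, ← ht, ← hh] using (hac.tail_ne_head e he).symm

lemma IsLNetwork.wellFormed (hL : M.IsLNetwork) : M.WellFormed where
  tail_ne_head := hL.acyclic.tail_ne_head
  tail_mem := hL.wfT
  head_mem := hL.wfH
  leaf z hz e he := by
    have hzV : z ∈ M.V := by
      by_contra h; simp [hL.lblV z h] at hz
    obtain ⟨-, hout, hund⟩ := (hL.lblLeaf z hzV).mp hz
    have hin : M.indeg z ≤ 1 := hL.leavesTree z ⟨hzV, hout, hund⟩
    have hcard : (M.incE z).card ≤ 1 := by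
      rw [card_incE_eq_deg hL.acyclic.tail_ne_head, deg]; omega
    refine ⟨Finset.eq_singleton_iff_unique_mem.mpr
      ⟨he, fun g hg => Finset.card_le_one.mp hcard g hg e he⟩, ?_⟩
    obtain ⟨heE, hez⟩ := mem_incE.mp he
    cases hd : M.dir e
    · have := Finset.card_eq_zero.mp hund
      exact absurd (Finset.mem_filter.mpr ⟨heE, hd, hez⟩) (this ▸ Finset.notMem_empty e)
    · refine ⟨rfl, hez.resolve_left fun h => ?_⟩
      have := Finset.card_eq_zero.mp hout
      exact absurd (Finset.mem_filter.mpr ⟨heE, hd, h⟩) (this ▸ Finset.notMem_empty e)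
  lbl_inj := hL.lblInj

lemma IsBinary.deg_le_three (hB : M.IsBinary) {v : ℕ} (hv : v ∈ M.V) : M.deg v ≤ 3 := by
  by_cases hr : M.IsRootNode v
  · rcases (hB v hv).1 hr with h | h | h <;> omega
  by_cases hl : M.IsLeafNode v
  · rcases (hB v hv).2.1 hl with h | h <;> omega
  exact ((hB v hv).2.2 hr hl).le

lemma IsComplete.undeg_head_eq_zero (hC : M.IsComplete)
    (noloop : ∀ e ∈ M.E, M.tail e ≠ M.head e) {e : ℕ} (he : e ∈ M.E) (hd : M.dir e = true)
    (hv : M.head e ∈ M.V) :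
    M.undeg (M.head e) = 0 := by
  refine Finset.card_eq_zero.mpr (Finset.filter_eq_empty_iff.mpr fun g hg ⟨hdg, hinc⟩ => ?_)
  refine hC.2 (M.head e) hv (fun htriv => ?_) e he hd Relation.ReflTransGen.refl
  rcases hinc with h | h
  · have := htriv _ (Relation.ReflTransGen.single ⟨g, hg, hdg, Or.inl ⟨h, rfl⟩⟩)
    exact noloop g hg (h.trans this.symm)
  · have := htriv _ (Relation.ReflTransGen.single ⟨g, hg, hdg, Or.inr ⟨rfl, h⟩⟩)
    exact noloop g hg (this.trans h.symm)

lemma Good.incE_head_eq (hG : M.Good) {hi he : ℕ} (hne : hi ≠ he) (hiE : hi ∈ M.E)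
    (heE : he ∈ M.E) (hdi : M.dir hi = true) (hde : M.dir he = true)
    (hh : M.head he = M.head hi) :
    ∃ ev, M.incE (M.head hi) = {hi, he, ev} ∧ M.dir ev = true ∧ M.tail ev = M.head hi := by
  obtain ⟨hL, hB, hC⟩ := hG
  have hvV := hL.wfH hi hiE
  have hsub : ({hi, he} : Finset ℕ) ⊆
      M.E.filter (fun e => M.dir e = true ∧ M.head e = M.head hi) := by
    simp [Finset.insert_subset_iff, hiE, heE, hdi, hde, hh]
  have hin : 2 ≤ M.indeg (M.head hi) := Finset.card_pair hne ▸ Finset.card_le_card hsub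
  have hund := hC.undeg_head_eq_zero hL.acyclic.tail_ne_head hiE hdi hvV
  have hleaf : ¬ M.IsLeafNode (M.head hi) := fun h => by
    have := hL.leavesTree _ h; unfold IsTreeNode at this; omega
  have hdeg : M.deg (M.head hi) = 3 := (hB _ hvV).2.2 (fun h => by have := h.2.1; omega) hleaf
  have hout : M.outdeg (M.head hi) = 1 := by
    have : M.outdeg (M.head hi) ≠ 0 := fun h => hleaf ⟨hvV, h, hund⟩
    unfold deg at hdeg; omega
  have hinE := Finset.eq_of_subset_of_card_le hsub (by
    rw [Finset.card_pair hne]; change M.indeg _ ≤ 2; unfold deg at hdeg; omega)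
  obtain ⟨ev, hev⟩ := Finset.card_eq_one.mp hout
  obtain ⟨-, hdev, htev⟩ := Finset.mem_filter.mp (hev ▸ Finset.mem_singleton_self ev)
  refine ⟨ev, ?_, hdev, htev⟩
  rw [incE_eq_union, ← hinE, hev, Finset.card_eq_zero.mp hund]
  ext g
  simp only [Finset.mem_union, Finset.mem_insert, Finset.mem_singleton, Finset.notMem_empty]
  tauto

end

/-- Suppressing such a node `p` replaces its two edges by a single edge `q → M.head eL`. -/
structure LeafPath (M : Net n) (p q f eL : ℕ) : Prop where
  incE_eq : M.incE p = {eL, f}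
  dir_eL : M.dir eL = true
  tail_eL : M.tail eL = p
  lbl_head_eL : (M.lbl (M.head eL)).isSome
  mem_incE_f : f ∈ M.incE q
  ne : q ≠ p
  not_out : ¬(M.dir f = true ∧ M.tail f = p)

lemma leafPath_of_incE_eq_pair {M : Net n} (W : M.WellFormed) {p eL f : ℕ}
    (hp : M.incE p = {eL, f}) (hd : M.dir eL = true) (ht : M.tail eL = p)
    (hz : (M.lbl (M.head eL)).isSome) (hf : ¬(M.dir f = true ∧ M.tail f = p)) :
    M.LeafPath p (if M.tail f = p then M.head f else M.tail f) f eL := by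
  have hfE : f ∈ M.E := M.incE_subset p (by simp [hp])
  refine ⟨hp, hd, ht, hz, ?_, ?_, hf⟩
  · split_ifs <;> simp [mem_incE, hfE]
  · split_ifs with h
    · exact fun h' => W.tail_ne_head f hfE (h.trans h'.symm)
    · exact h

namespace LeafPath

variable {M : Net n} {p q f eL : ℕ}

lemma eL_mem (h : M.LeafPath p q f eL) : eL ∈ M.E := M.incE_subset p (by simp [h.incE_eq])

lemma f_mem_incE (h : M.LeafPath p q f eL) : f ∈ M.incE p := by simp [h.incE_eq]

lemma eL_ne_f (h : M.LeafPath p q f eL) : eL ≠ f := by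
  rintro rfl; exact h.not_out ⟨h.dir_eL, h.tail_eL⟩

lemma lbl_q (h : M.LeafPath p q f eL) (W : M.WellFormed) : M.lbl q = none := by
  refine W.lbl_eq_none h.mem_incE_f fun ⟨hd, hh⟩ => h.not_out ⟨hd, ?_⟩
  rcases (mem_incE.mp h.f_mem_incE).2 with h' | h'
  · exact h'
  · exact absurd (hh.symm.trans h') h.ne

lemma lbl_p (h : M.LeafPath p q f eL) (W : M.WellFormed) : M.lbl p = none :=
  h.tail_eL ▸ W.lbl_tail_eq_none h.eL_mem

lemma incE_head_eL (h : M.LeafPath p q f eL) (W : M.WellFormed) : M.incE (M.head eL) = {eL} :=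
  W.incE_eq_singleton h.lbl_head_eL h.eL_mem rfl

lemma mem_incE_f_iff (h : M.LeafPath p q f eL) {w : ℕ} : f ∈ M.incE w ↔ w = p ∨ w = q := by
  have hp := (mem_incE.mp h.f_mem_incE).2
  have hq := (mem_incE.mp h.mem_incE_f).2
  have := h.ne
  refine ⟨fun hw => ?_, ?_⟩
  · rcases (mem_incE.mp hw).2 with h' | h' <;> omega
  · rintro (rfl | rfl)
    exacts [h.f_mem_incE, h.mem_incE_f]

lemma other_eq (h : M.LeafPath p q f eL) :
    (if M.tail f = p then M.head f else M.tail f) = q := by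
  have hp := (mem_incE.mp h.f_mem_incE).2
  have hq := (mem_incE.mp h.mem_incE_f).2
  have := h.ne
  split_ifs <;> omega

lemma suppress_eq (h : M.LeafPath p q f eL) :
    ∃ k d, ({k, d} : Finset ℕ) = {eL, f} ∧ k ≠ d ∧
      M.suppress p = M.replaceEdge p k d q (M.head eL) true := by
  obtain ⟨k, d, hsort⟩ : ∃ k d, (M.incE p).sort (· ≤ ·) = [k, d] :=
    List.length_eq_two.mp (by rw [Finset.length_sort, h.incE_eq, Finset.card_pair h.eL_ne_f])
  have hkd : ({k, d} : Finset ℕ) = {eL, f} := by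
    rw [← h.incE_eq, ← Finset.sort_toFinset (M.incE p) (· ≤ ·), hsort]
    simp
  have hkd' : k ≠ d := by
    have := Finset.sort_nodup (M.incE p) (· ≤ ·)
    rw [hsort] at this
    simpa using this
  refine ⟨k, d, hkd, hkd', ?_⟩
  have hpair := eq_or_eq_iff_of_pair_eq hkd
  rw [suppress, hsort]
  rcases (hpair k).mp (Or.inl rfl) with rfl | rfl
  · obtain rfl : d = f := ((hpair d).mp (Or.inr rfl)).resolve_left hkd'.symm
    simp [h.dir_eL, h.tail_eL, h.other_eq]
  · obtain rfl : d = eL := ((hpair d).mp (Or.inr rfl)).resolve_right hkd'.symm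
    simp [h.dir_eL, h.tail_eL, h.not_out, h.other_eq]

variable {k d : ℕ}

lemma mem_of_pair_eq (h : M.LeafPath p q f eL) (hkd : ({k, d} : Finset ℕ) = {eL, f}) :
    k ∈ M.E :=
  M.incE_subset p (by rw [h.incE_eq, ← hkd]; simp)

lemma incE_replaceEdge_head (h : M.LeafPath p q f eL) (W : M.WellFormed)
    (hkd : ({k, d} : Finset ℕ) = {eL, f}) (hkd' : k ≠ d) :
    (M.replaceEdge p k d q (M.head eL) true).incE (M.head eL) = {k} := by
  ext g
  rw [M.mem_incE_replaceEdge true (h.mem_of_pair_eq hkd) hkd', h.incE_head_eL W,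
    Finset.mem_singleton, Finset.mem_singleton]
  have := eq_or_eq_iff_of_pair_eq hkd eL
  constructor
  · rintro (h' | ⟨rfl, h'⟩)
    · exact h'.1
    · tauto
  · rintro rfl; simp

lemma ne_head_eL (h : M.LeafPath p q f eL) (W : M.WellFormed) : q ≠ M.head eL := fun h' => by
  have := h.lbl_head_eL
  rw [← h', h.lbl_q W] at this
  simp at this

lemma notMem_incE_of_ne (h : M.LeafPath p q f eL) {w : ℕ} (hwp : w ≠ p) (hwq : w ≠ q)
    (hwz : w ≠ M.head eL) : eL ∉ M.incE w ∧ f ∉ M.incE w := by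
  refine ⟨fun hL => ?_, fun hf => ?_⟩
  · rcases (mem_incE.mp hL).2 with h' | h'
    exacts [hwp (h'.symm.trans h.tail_eL), hwz h'.symm]
  · rcases h.mem_incE_f_iff.mp hf with h' | h'
    exacts [hwp h', hwq h']

lemma incE_replaceEdge_of_ne (h : M.LeafPath p q f eL) (hkd : ({k, d} : Finset ℕ) = {eL, f})
    (hkd' : k ≠ d) {w : ℕ} (hwp : w ≠ p) (hwq : w ≠ q) (hwz : w ≠ M.head eL) :
    (M.replaceEdge p k d q (M.head eL) true).incE w = M.incE w := by
  have hoff := h.notMem_incE_of_ne hwp hwq hwz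
  ext g
  rw [M.mem_incE_replaceEdge true (h.mem_of_pair_eq hkd) hkd']
  constructor
  · rintro (⟨-, h' | h'⟩ | ⟨h', -⟩)
    exacts [absurd h'.symm hwq, absurd h'.symm hwz, h']
  · intro hg
    refine Or.inr ⟨hg, not_or.mp fun hgkd => ?_⟩
    rcases (eq_or_eq_iff_of_pair_eq hkd g).mp hgkd with h' | h'
    exacts [hoff.1 (h' ▸ hg), hoff.2 (h' ▸ hg)]

lemma incE_replaceEdge_other (h : M.LeafPath p q f eL) (W : M.WellFormed)
    (hkd : ({k, d} : Finset ℕ) = {eL, f}) (hkd' : k ≠ d) :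
    (M.replaceEdge p k d q (M.head eL) true).incE q = insert k ((M.incE q).erase f) := by
  have hL : eL ∉ M.incE q := fun hL => by
    rcases (mem_incE.mp hL).2 with h' | h'
    exacts [h.ne (h'.symm.trans h.tail_eL), h.ne_head_eL W h'.symm]
  have hiff := eq_or_eq_iff_of_pair_eq hkd
  ext g
  rw [M.mem_incE_replaceEdge true (h.mem_of_pair_eq hkd) hkd', Finset.mem_insert,
    Finset.mem_erase]
  have := hiff g
  by_cases hgL : g = eL
  · subst hgL; tauto
  · tauto

lemma leaf_replaceEdge (h : M.LeafPath p q f eL) (W : M.WellFormed)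
    (hkd : ({k, d} : Finset ℕ) = {eL, f}) (hkd' : k ≠ d) {w e : ℕ} (hw : (M.lbl w).isSome)
    (he : e ∈ (M.replaceEdge p k d q (M.head eL) true).incE w) :
    (M.replaceEdge p k d q (M.head eL) true).incE w = {e} ∧
      (M.replaceEdge p k d q (M.head eL) true).dir e = true ∧
      (M.replaceEdge p k d q (M.head eL) true).head e = w := by
  by_cases hwz : w = M.head eL
  · subst hwz
    rw [h.incE_replaceEdge_head W hkd hkd'] at he ⊢
    rw [Finset.mem_singleton] at he
    subst he
    simp [replaceEdge]
  · have hwp : w ≠ p := fun h' => by simp [h', h.lbl_p W] at hw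
    have hwq : w ≠ q := fun h' => by simp [h', h.lbl_q W] at hw
    rw [h.incE_replaceEdge_of_ne hkd hkd' hwp hwq hwz] at he ⊢
    obtain ⟨hw1, hd, hh⟩ := W.leaf w hw e he
    have hek : e ≠ k := fun h' => by
      rcases (eq_or_eq_iff_of_pair_eq hkd e).mp (Or.inl h') with h'' | h''
      exacts [(h.notMem_incE_of_ne hwp hwq hwz).1 (h'' ▸ he),
        (h.notMem_incE_of_ne hwp hwq hwz).2 (h'' ▸ he)]
    rw [(M.replaceEdge_of_ne true hek).1, (M.replaceEdge_of_ne true hek).2.2]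
    exact ⟨hw1, hd, hh⟩

lemma wellFormed_replaceEdge (h : M.LeafPath p q f eL) (W : M.WellFormed)
    (hkd : ({k, d} : Finset ℕ) = {eL, f}) (hkd' : k ≠ d) :
    (M.replaceEdge p k d q (M.head eL) true).WellFormed := by
  have hfE : f ∈ M.E := M.incE_subset p h.f_mem_incE
  have hzp : M.head eL ≠ p := fun h' => W.tail_ne_head eL h.eL_mem (h.tail_eL.trans h'.symm)
  have hqV : q ∈ M.V := by
    rcases (mem_incE.mp h.mem_incE_f).2 with h' | h'
    exacts [h' ▸ W.tail_mem f hfE, h' ▸ W.head_mem f hfE]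
  have hoff : ∀ e ∈ M.E, e ≠ k → e ≠ d → M.tail e ≠ p ∧ M.head e ≠ p := by
    intro e he h1 h2
    have : e ∉ M.incE p := by rw [h.incE_eq, ← hkd]; simp [h1, h2]
    simp only [mem_incE, not_and, not_or] at this
    exact this he
  obtain ⟨-, htk, hhk⟩ := M.replaceEdge_self (p := p) (k := k) (d := d) (q := q)
    (z := M.head eL) true
  refine ⟨fun e he => ?_, fun e he => ?_, fun e he => ?_,
    fun w hw e he => h.leaf_replaceEdge W hkd hkd' hw he, fun a ha b hb =>
      W.lbl_inj a (Finset.mem_of_mem_erase ha) b (Finset.mem_of_mem_erase hb)⟩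
  · by_cases hek : e = k
    · rw [hek, htk, hhk]
      exact h.ne_head_eL W
    · rw [(M.replaceEdge_of_ne true hek).2.1, (M.replaceEdge_of_ne true hek).2.2]
      exact W.tail_ne_head e (Finset.mem_of_mem_erase he)
  · by_cases hek : e = k
    · rw [hek, htk]
      exact Finset.mem_erase.mpr ⟨h.ne, hqV⟩
    · obtain ⟨hed, he⟩ := Finset.mem_erase.mp he
      rw [(M.replaceEdge_of_ne true hek).2.1]
      exact Finset.mem_erase.mpr ⟨(hoff e he hek hed).1, W.tail_mem e he⟩
  · by_cases hek : e = k
    · rw [hek, hhk]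
      exact Finset.mem_erase.mpr ⟨hzp, W.head_mem eL h.eL_mem⟩
    · obtain ⟨hed, he⟩ := Finset.mem_erase.mp he
      rw [(M.replaceEdge_of_ne true hek).2.2]
      exact Finset.mem_erase.mpr ⟨(hoff e he hek hed).2, W.head_mem e he⟩

end LeafPath

def HasN2Component (M : Net n) (hi he : ℕ) : Prop :=
  ∃ u v x y e1 e2 : ℕ,
    ([u, v, x, y] : List ℕ).Nodup ∧
    u ∈ M.V ∧ v ∈ M.V ∧ x ∈ M.V ∧ y ∈ M.V ∧
    ([hi, he, e1, e2] : List ℕ).Nodup ∧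
    hi ∈ M.E ∧ he ∈ M.E ∧ e1 ∈ M.E ∧ e2 ∈ M.E ∧
    M.dir hi = true ∧ M.tail hi = u ∧ M.head hi = v ∧
    M.dir he = true ∧ M.tail he = u ∧ M.head he = v ∧
    M.dir e1 = true ∧ M.tail e1 = u ∧ M.head e1 = y ∧
    M.dir e2 = true ∧ M.tail e2 = v ∧ M.head e2 = x ∧
    (M.lbl x).isSome ∧ (M.lbl y).isSome ∧
    (∀ e ∈ M.E,
      (M.tail e = u ∨ M.tail e = v ∨ M.tail e = x ∨ M.tail e = y ∨
        M.head e = u ∨ M.head e = v ∨ M.head e = x ∨ M.head e = y) →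
      e = hi ∨ e = he ∨ e = e1 ∨ e = e2)

/-- The invariant kept along a reduction sequence until `N_2` appears. -/
structure ParallelPair (M : Net n) (hi he : ℕ) : Prop where
  wf : M.WellFormed
  ne : hi ≠ he
  hi_mem : hi ∈ M.E
  he_mem : he ∈ M.E
  dir_hi : M.dir hi = true
  dir_he : M.dir he = true
  tail_he : M.tail he = M.tail hi
  head_he : M.head he = M.head hi
  card_incE_tail : (M.incE (M.tail hi)).card ≤ 3
  incE_head :
    ∃ ev, M.incE (M.head hi) = {hi, he, ev} ∧ M.dir ev = true ∧ M.tail ev = M.head hi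

namespace ParallelPair

variable {M : Net n} {hi he : ℕ}

lemma hi_mem_incE_tail (P : M.ParallelPair hi he) : hi ∈ M.incE (M.tail hi) :=
  mem_incE.mpr ⟨P.hi_mem, Or.inl rfl⟩

lemma he_mem_incE_tail (P : M.ParallelPair hi he) : he ∈ M.incE (M.tail hi) :=
  mem_incE.mpr ⟨P.he_mem, Or.inl P.tail_he⟩

lemma lbl_tail (P : M.ParallelPair hi he) : M.lbl (M.tail hi) = none :=
  P.wf.lbl_tail_eq_none P.hi_mem

lemma lbl_head (P : M.ParallelPair hi he) : M.lbl (M.head hi) = none := by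
  obtain ⟨ev, hv, -, ht⟩ := P.incE_head
  rw [← ht]
  exact P.wf.lbl_tail_eq_none (M.incE_subset (M.head hi) (by rw [hv]; simp))

lemma ne_tail_of_lbl (P : M.ParallelPair hi he) {z : ℕ} (hz : (M.lbl z).isSome) :
    z ≠ M.tail hi := by
  rintro rfl; simp [P.lbl_tail] at hz

lemma ne_head_of_lbl (P : M.ParallelPair hi he) {z : ℕ} (hz : (M.lbl z).isSome) :
    z ≠ M.head hi := by
  rintro rfl; simp [P.lbl_head] at hz

lemma notMem_incE (P : M.ParallelPair hi he) {p : ℕ} (hpu : p ≠ M.tail hi)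
    (hpv : p ≠ M.head hi) : hi ∉ M.incE p ∧ he ∉ M.incE p := by
  simp only [mem_incE, P.tail_he, P.head_he]
  constructor <;> rintro ⟨-, h | h⟩
  exacts [hpu h.symm, hpv h.symm, hpu h.symm, hpv h.symm]

lemma eq_of_mem_incE_tail (P : M.ParallelPair hi he) {e g : ℕ} (he' : e ∈ M.incE (M.tail hi))
    (hg : g ∈ M.incE (M.tail hi)) (hev : M.head e ≠ M.head hi) (hgv : M.head g ≠ M.head hi) :
    e = g := by
  by_contra hne
  have hsub : ({hi, he, e, g} : Finset ℕ) ⊆ M.incE (M.tail hi) := by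
    simp [Finset.insert_subset_iff, P.hi_mem_incE_tail, P.he_mem_incE_tail, he', hg]
  have he₁ : e ≠ hi := fun h => hev (by rw [h])
  have he₂ : e ≠ he := fun h => hev (by rw [h, P.head_he])
  have hg₁ : g ≠ hi := fun h => hgv (by rw [h])
  have hg₂ : g ≠ he := fun h => hgv (by rw [h, P.head_he])
  have := (Finset.card_le_card hsub).trans P.card_incE_tail
  rw [Finset.card_insert_of_notMem (by simp [P.ne, he₁.symm, hg₁.symm]),
    Finset.card_insert_of_notMem (by simp [he₂.symm, hg₂.symm]), Finset.card_pair hne] at this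
  omega

lemma eq_of_mem_incE_head (P : M.ParallelPair hi he) {e g : ℕ} (he' : e ∈ M.incE (M.head hi))
    (hg : g ∈ M.incE (M.head hi)) (hev : M.head e ≠ M.head hi) (hgv : M.head g ≠ M.head hi) :
    e = g := by
  obtain ⟨ev, hv, -, -⟩ := P.incE_head
  have hev' : ∀ x ∈ M.incE (M.head hi), M.head x ≠ M.head hi → x = ev := by
    intro x hx hxv
    rw [hv, Finset.mem_insert, Finset.mem_insert, Finset.mem_singleton] at hx
    rcases hx with h | h | h
    exacts [absurd (by rw [h]) hxv, absurd (by rw [h, P.head_he]) hxv, h]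
  exact (hev' e he' hev).trans (hev' g hg hgv).symm

lemma ne_of_out_edges (P : M.ParallelPair hi he) {p e g : ℕ} (he' : e ∈ M.E)
    (hte : M.tail e = p) (hg : g ∈ M.E) (htg : M.tail g = p) (hev : M.head e ≠ M.head hi)
    (hgv : M.head g ≠ M.head hi) (heg : e ≠ g) : p ≠ M.tail hi ∧ p ≠ M.head hi :=
  ⟨fun h => heg <| P.eq_of_mem_incE_tail (mem_incE.mpr ⟨he', Or.inl (hte.trans h)⟩)
      (mem_incE.mpr ⟨hg, Or.inl (htg.trans h)⟩) hev hgv,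
    fun h => heg <| P.eq_of_mem_incE_head (mem_incE.mpr ⟨he', Or.inl (hte.trans h)⟩)
      (mem_incE.mpr ⟨hg, Or.inl (htg.trans h)⟩) hev hgv⟩

lemma ne_tail_of_isHybrid (P : M.ParallelPair hi he) {p : ℕ} (hp : M.IsHybrid p) :
    p ≠ M.tail hi := by
  intro h
  obtain ⟨g₁, hg₁, -, hh₁, -⟩ := hp.exists_inEdge_ne 0
  obtain ⟨g₂, hg₂, -, hh₂, hne⟩ := hp.exists_inEdge_ne g₁
  have huv := P.wf.tail_ne_head hi P.hi_mem
  exact hne <| P.eq_of_mem_incE_tail (mem_incE.mpr ⟨hg₂, Or.inr (hh₂.trans h)⟩)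
    (mem_incE.mpr ⟨hg₁, Or.inr (hh₁.trans h)⟩) (hh₂.trans h ▸ huv)
    (hh₁.trans h ▸ huv)

lemma tail_eq_of_head_eq (P : M.ParallelPair hi he) {e : ℕ} (he' : e ∈ M.E)
    (hh : M.head e = M.head hi) : M.tail e = M.tail hi := by
  obtain ⟨ev, hv, -, htev⟩ := P.incE_head
  have : e ∈ M.incE (M.head hi) := mem_incE.mpr ⟨he', Or.inr hh⟩
  rw [hv, Finset.mem_insert, Finset.mem_insert, Finset.mem_singleton] at this
  rcases this with h | h | h
  · rw [h]
  · rw [h, P.tail_he]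
  · rw [← h] at htev
    exact absurd (htev.trans hh.symm) (P.wf.tail_ne_head e he')

lemma incE_tail_eq (P : M.ParallelPair hi he) {e : ℕ} (he' : e ∈ M.E)
    (ht : M.tail e = M.tail hi) (hev : M.head e ≠ M.head hi) :
    M.incE (M.tail hi) = {hi, he, e} := by
  have hei : e ≠ hi := fun h => hev (by rw [h])
  have hee : e ≠ he := fun h => hev (by rw [h, P.head_he])
  refine (Finset.eq_of_subset_of_card_le ?_ ?_).symm
  · simp [Finset.insert_subset_iff, P.hi_mem_incE_tail, P.he_mem_incE_tail, mem_incE, he', ht]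
  · rw [Finset.card_insert_of_notMem (by simp [P.ne, hei.symm]), Finset.card_pair hee.symm]
    exact P.card_incE_tail

lemma of_isSubnet (P : M.ParallelPair hi he) {M' : Net n} (h : M'.IsSubnet M)
    (W : M'.WellFormed) (hv : M.incE (M.head hi) ⊆ M'.E) : M'.ParallelPair hi he := by
  obtain ⟨ev, hev, hd, ht⟩ := P.incE_head
  have hincE : M'.incE (M'.head hi) = M.incE (M.head hi) := by
    ext e
    rw [h.mem_incE, h.head_eq]
    exact ⟨And.right, fun he => ⟨hv he, he⟩⟩
  refine ⟨W, P.ne, hv (by simp [hev]), hv (by simp [hev]), ?_, ?_, ?_, ?_, ?_, ⟨ev, ?_⟩⟩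
  all_goals simp only [h.dir_eq, h.tail_eq, h.head_eq] at hincE ⊢
  · exact P.dir_hi
  · exact P.dir_he
  · exact P.tail_he
  · exact P.head_he
  · exact (Finset.card_le_card (h.incE_subset _)).trans (h.tail_eq ▸ P.card_incE_tail)
  · exact ⟨hincE.trans hev, hd, ht⟩

lemma deleteLeaf (P : M.ParallelPair hi he) {x : ℕ}
    (hx : Disjoint (M.incE (M.head hi)) (M.incE x)) : (M.deleteLeaf x).ParallelPair hi he := by
  have h := M.isSubnet_deleteLeaf x
  refine P.of_isSubnet h (h.wellFormed P.wf fun e he' => ?_) fun e he' => ?_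
  · obtain ⟨he', hx⟩ := Finset.mem_sdiff.mp he'
    simp only [mem_incE, not_and, not_or] at hx
    exact ⟨Finset.mem_erase.mpr ⟨(hx he').1, P.wf.tail_mem e he'⟩,
      Finset.mem_erase.mpr ⟨(hx he').2, P.wf.head_mem e he'⟩⟩
  · exact Finset.mem_sdiff.mpr ⟨M.incE_subset _ he', Finset.disjoint_left.mp hx he'⟩

lemma eraseEdge (P : M.ParallelPair hi he) {e : ℕ} (hev : e ∉ M.incE (M.head hi)) :
    ({ M with E := M.E.erase e } : Net n).ParallelPair hi he := by
  have h := M.isSubnet_eraseEdge e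
  refine P.of_isSubnet h (h.wellFormed P.wf fun g hg => ?_) fun g hg => ?_
  · have hg := Finset.mem_of_mem_erase hg
    exact ⟨P.wf.tail_mem g hg, P.wf.head_mem g hg⟩
  · exact Finset.mem_erase.mpr ⟨fun h => hev (h ▸ hg), M.incE_subset _ hg⟩

lemma suppress_of_incE_eq_singleton (P : M.ParallelPair hi he) {p e : ℕ}
    (hp : M.incE p = {e}) (hev : e ∉ M.incE (M.head hi)) : (M.suppress p).ParallelPair hi he := by
  rw [suppress_eq_eraseNodeEdge hp]
  have h := M.isSubnet_eraseNodeEdge p e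
  have hoff : ∀ g ∈ M.E, g ≠ e → M.tail g ≠ p ∧ M.head g ≠ p := fun g hg hge => by
    have : g ∉ M.incE p := by simpa [hp] using hge
    simp only [mem_incE, not_and, not_or] at this
    exact this hg
  refine P.of_isSubnet h (h.wellFormed P.wf fun g hg => ?_) fun g hg => ?_
  · obtain ⟨hge, hg⟩ := Finset.mem_erase.mp hg
    exact ⟨Finset.mem_erase.mpr ⟨(hoff g hg hge).1, P.wf.tail_mem g hg⟩,
      Finset.mem_erase.mpr ⟨(hoff g hg hge).2, P.wf.head_mem g hg⟩⟩
  · exact Finset.mem_erase.mpr ⟨fun h => hev (h ▸ hg), M.incE_subset _ hg⟩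

lemma card_incE_tail_replaceEdge {p q f eL k d : ℕ} (P : M.ParallelPair hi he)
    (h : M.LeafPath p q f eL) (hpu : p ≠ M.tail hi) (hkd : ({k, d} : Finset ℕ) = {eL, f})
    (hkd' : k ≠ d) : ((M.replaceEdge p k d q (M.head eL) true).incE (M.tail hi)).card ≤ 3 := by
  by_cases hqu : q = M.tail hi
  · have := P.card_incE_tail
    subst hqu
    rw [h.incE_replaceEdge_other P.wf hkd hkd']
    have := Finset.card_insert_le k ((M.incE (M.tail hi)).erase f)
    have := Finset.card_erase_of_mem h.mem_incE_f
    have := Finset.card_pos.mpr ⟨f, h.mem_incE_f⟩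
    omega
  · rw [h.incE_replaceEdge_of_ne hkd hkd' hpu.symm (Ne.symm hqu)
      (P.ne_tail_of_lbl h.lbl_head_eL).symm]
    exact P.card_incE_tail

lemma incE_head_replaceEdge {p q f eL k d : ℕ} (P : M.ParallelPair hi he)
    (h : M.LeafPath p q f eL) (hpu : p ≠ M.tail hi) (hpv : p ≠ M.head hi)
    (hkd : ({k, d} : Finset ℕ) = {eL, f}) (hkd' : k ≠ d) :
    ∃ ev, (M.replaceEdge p k d q (M.head eL) true).incE (M.head hi) = {hi, he, ev} ∧
      (M.replaceEdge p k d q (M.head eL) true).dir ev = true ∧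
      (M.replaceEdge p k d q (M.head eL) true).tail ev = M.head hi := by
  obtain ⟨ev, hv, hdev, htev⟩ := P.incE_head
  have hzv := (P.ne_head_of_lbl h.lbl_head_eL).symm
  by_cases hqv : q = M.head hi
  · have hfv : f = ev := by
      have hf := h.mem_incE_f
      rw [hqv, hv, Finset.mem_insert, Finset.mem_insert, Finset.mem_singleton] at hf
      rcases hf with hf | hf | hf
      exacts [absurd (hf ▸ h.f_mem_incE) (P.notMem_incE hpu hpv).1,
        absurd (hf ▸ h.f_mem_incE) (P.notMem_incE hpu hpv).2, hf]
    have huv := P.wf.tail_ne_head hi P.hi_mem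
    have hevi : ev ≠ hi := fun h' => huv (by rw [← htev, h'])
    have heve : ev ≠ he := fun h' => huv (by rw [← htev, h', P.tail_he])
    obtain ⟨hdk, htk, -⟩ := M.replaceEdge_self (p := p) (k := k) (d := d) (q := q)
      (z := M.head eL) true
    refine ⟨k, ?_, hdk, htk.trans hqv⟩
    rw [← hqv, h.incE_replaceEdge_other P.wf hkd hkd', hqv, hv, ← hfv]
    ext g
    simp only [Finset.mem_insert, Finset.mem_erase, Finset.mem_singleton]
    grind
  · have hoff := h.notMem_incE_of_ne hpv.symm (Ne.symm hqv) hzv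
    have hevk : ev ≠ k := fun h' => by
      have hev : ev ∈ M.incE (M.head hi) := by rw [hv]; simp
      rcases (eq_or_eq_iff_of_pair_eq hkd ev).mp (Or.inl h') with h'' | h''
      exacts [hoff.1 (h'' ▸ hev), hoff.2 (h'' ▸ hev)]
    refine ⟨ev, ?_, ?_, ?_⟩
    · rw [h.incE_replaceEdge_of_ne hkd hkd' hpv.symm (Ne.symm hqv) hzv, hv]
    · rw [(M.replaceEdge_of_ne true hevk).1, hdev]
    · rw [(M.replaceEdge_of_ne true hevk).2.1, htev]

lemma replaceEdge {p q f eL k d : ℕ} (P : M.ParallelPair hi he) (h : M.LeafPath p q f eL)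
    (hpu : p ≠ M.tail hi) (hpv : p ≠ M.head hi) (hkd : ({k, d} : Finset ℕ) = {eL, f})
    (hkd' : k ≠ d) : (M.replaceEdge p k d q (M.head eL) true).ParallelPair hi he := by
  have hhik : hi ≠ k := fun h' => (P.notMem_incE hpu hpv).1 (by rw [h.incE_eq, ← hkd, h']; simp)
  have hhek : he ≠ k := fun h' => (P.notMem_incE hpu hpv).2 (by rw [h.incE_eq, ← hkd, h']; simp)
  have hhid : hi ≠ d := fun h' => (P.notMem_incE hpu hpv).1 (by rw [h.incE_eq, ← hkd, h']; simp)
  have hhed : he ≠ d := fun h' => (P.notMem_incE hpu hpv).2 (by rw [h.incE_eq, ← hkd, h']; simp)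
  obtain ⟨hdi, hti, hhi⟩ := M.replaceEdge_of_ne (p := p) (d := d) (q := q) (z := M.head eL)
    true hhik
  obtain ⟨hde, hte, hhe⟩ := M.replaceEdge_of_ne (p := p) (d := d) (q := q) (z := M.head eL)
    true hhek
  refine ⟨h.wellFormed_replaceEdge P.wf hkd hkd', P.ne, Finset.mem_erase.mpr ⟨hhid, P.hi_mem⟩,
    Finset.mem_erase.mpr ⟨hhed, P.he_mem⟩, hdi ▸ P.dir_hi, hde ▸ P.dir_he,
    hte ▸ hti ▸ P.tail_he, hhe ▸ hhi ▸ P.head_he, ?_, ?_⟩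
  · rw [hti]
    exact P.card_incE_tail_replaceEdge h hpu hkd hkd'
  · rw [hhi]
    exact P.incE_head_replaceEdge h hpu hpv hkd hkd'

lemma suppress_of_leafPath {p q f eL : ℕ} (P : M.ParallelPair hi he)
    (h : M.LeafPath p q f eL)
    (hpu : p ≠ M.tail hi) (hpv : p ≠ M.head hi) : (M.suppress p).ParallelPair hi he := by
  obtain ⟨k, d, hkd, hkd', hM⟩ := h.suppress_eq
  rw [hM]
  exact P.replaceEdge h hpu hpv hkd hkd'

lemma suppressIf (P : M.ParallelPair hi he) {p eL : ℕ} (hpu : p ≠ M.tail hi)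
    (hpv : p ≠ M.head hi) (heL : eL ∈ M.E) (hd : M.dir eL = true) (ht : M.tail eL = p)
    (hz : (M.lbl (M.head eL)).isSome) : (M.suppressIf p).ParallelPair hi he := by
  unfold Net.suppressIf
  split_ifs with hS
  · have hpL : eL ∈ M.incE p := mem_incE.mpr ⟨heL, Or.inl ht⟩
    obtain ⟨-, ⟨hdeg, hroot⟩ | ⟨hdeg, -⟩⟩ := hS
    · rw [← card_incE_eq_deg P.wf.tail_ne_head] at hdeg
      obtain ⟨f, hp⟩ : ∃ f, M.incE p = {eL, f} := by
        obtain ⟨x, y, -, hxy⟩ := Finset.card_eq_two.mp hdeg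
        rw [hxy, Finset.mem_insert, Finset.mem_singleton] at hpL
        rcases hpL with rfl | rfl
        exacts [⟨y, hxy⟩, ⟨x, hxy.trans (Finset.pair_comm _ _)⟩]
      refine P.suppress_of_leafPath (leafPath_of_incE_eq_pair P.wf hp hd ht hz fun hf => ?_)
        hpu hpv
      refine hroot (isRootNode_of_forall_out P.wf.tail_ne_head (ht ▸ P.wf.tail_mem eL heL) ?_)
      intro g hg
      rw [hp, Finset.mem_insert, Finset.mem_singleton] at hg
      rcases hg with rfl | rfl
      exacts [⟨hd, ht⟩, hf]
    · rw [← card_incE_eq_deg P.wf.tail_ne_head] at hdeg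
      obtain ⟨x, hx⟩ := Finset.card_eq_one.mp hdeg
      rw [hx, Finset.mem_singleton] at hpL
      subst hpL
      refine P.suppress_of_incE_eq_singleton hx fun hv => ?_
      rcases (mem_incE.mp hv).2 with h | h
      exacts [hpv (ht.symm.trans h), P.ne_head_of_lbl hz h]
  · exact P

lemma suppress_of_in_out (P : M.ParallelPair hi he) {p eL h₀ : ℕ} (hpu : p ≠ M.tail hi)
    (hpv : p ≠ M.head hi) (heL : eL ∈ M.E) (hd : M.dir eL = true) (ht : M.tail eL = p)
    (hz : (M.lbl (M.head eL)).isSome) (h₀E : h₀ ∈ M.E) (hh₀ : M.head h₀ = p) :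
    (M.suppress p).ParallelPair hi he := by
  have hne : eL ≠ h₀ := by
    rintro rfl; exact P.wf.tail_ne_head eL heL (ht.trans hh₀.symm)
  have hsub : ({eL, h₀} : Finset ℕ) ⊆ M.incE p := by
    simp [Finset.insert_subset_iff, mem_incE, heL, ht, h₀E, hh₀]
  by_cases hc : (M.incE p).card ≤ 2
  · have hp := (Finset.eq_of_subset_of_card_le hsub (by rwa [Finset.card_pair hne])).symm
    refine P.suppress_of_leafPath (leafPath_of_incE_eq_pair P.wf hp hd ht hz ?_) hpu hpv
    exact fun h => P.wf.tail_ne_head h₀ h₀E (h.2.trans hh₀.symm)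
  · rw [suppress_eq_self (by omega)]
    exact P

lemma reduceTree (P : M.ParallelPair hi he) {a b : Fin n} (hT : M.TreeCherry a b) :
    (M.reduceTree a b).ParallelPair hi he := by
  obtain ⟨x, y, p, hax, hby, hxy, hpx, hpy⟩ := hT
  obtain ⟨ex, hexE, hdx, htx, hhx⟩ := hpx
  obtain ⟨ey, heyE, hdy, hty, hhy⟩ := hpy
  have hx : (M.lbl x).isSome := by simp [hax.2]
  have hy : (M.lbl y).isSome := by simp [hby.2]
  have hexv : M.head ex ≠ M.head hi := hhx ▸ P.ne_head_of_lbl hx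
  have hexy : ex ≠ ey := fun h => hxy (hhx.symm.trans (h ▸ hhy))
  obtain ⟨hpu, hpv⟩ :=
    P.ne_of_out_edges hexE htx heyE hty hexv (hhy ▸ P.ne_head_of_lbl hy) hexy
  have hxinc : M.incE x = {ex} := P.wf.incE_eq_singleton hx hexE hhx
  have P₁ : (M.deleteLeaf x).ParallelPair hi he := by
    refine P.deleteLeaf (hxinc ▸ Finset.disjoint_singleton_right.mpr fun h => ?_)
    rcases (mem_incE.mp h).2 with h | h
    exacts [hpv (htx.symm.trans h), hexv h]
  rw [Net.reduceTree, P.wf.labelNode_eq hax, P.wf.parentOf_eq hx hexE hdx hhx, htx]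
  refine P₁.suppressIf hpu hpv (Finset.mem_sdiff.mpr ⟨heyE, by simpa [hxinc] using hexy.symm⟩)
    hdy hty ?_
  change (Function.update M.lbl x none (M.head ey)).isSome
  rw [Function.update_of_ne (hhy ▸ hxy.symm), hhy]
  exact hy

lemma hasN2Component_of_parent_eq_head (P : M.ParallelPair hi he) {a b : Fin n}
    {x y pa pb : ℕ} (hax : M.HasLeaf a x) (hby : M.HasLeaf b y) (hxy : x ≠ y)
    (hpax : M.IsParentOf pa x) (hpby : M.IsParentOf pb y) (hpbpa : M.IsParentOf pb pa)
    (hpav : pa = M.head hi) : M.HasN2Component hi he := by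
  obtain ⟨e2, he2E, hd2, ht2, hh2⟩ := hpax
  obtain ⟨e1, he1E, hd1, ht1, hh1⟩ := hpby
  obtain ⟨e0, he0E, -, ht0, hh0⟩ := hpbpa
  subst hpav
  obtain ⟨ev, hv, -, htev⟩ := P.incE_head
  have hx : (M.lbl x).isSome := by simp [hax.2]
  have hy : (M.lbl y).isSome := by simp [hby.2]
  have huv : M.tail hi ≠ M.head hi := P.wf.tail_ne_head hi P.hi_mem
  have hevE : ev ∈ M.E := M.incE_subset (M.head hi) (by rw [hv]; simp)
  have hpbu : pb = M.tail hi := ht0 ▸ P.tail_eq_of_head_eq he0E hh0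
  have he2v : e2 = ev := P.eq_of_mem_incE_head (mem_incE.mpr ⟨he2E, Or.inl ht2⟩)
    (mem_incE.mpr ⟨hevE, Or.inl htev⟩) (hh2 ▸ P.ne_head_of_lbl hx)
    (fun h => P.wf.tail_ne_head ev hevE (htev.trans h.symm))
  have he1v : M.head e1 ≠ M.head hi := hh1 ▸ P.ne_head_of_lbl hy
  have hincu := P.incE_tail_eq he1E (ht1.trans hpbu) he1v
  have hincx : M.incE x = {e2} := P.wf.incE_eq_singleton hx he2E hh2
  have hincy : M.incE y = {e1} := P.wf.incE_eq_singleton hy he1E hh1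
  refine ⟨M.tail hi, M.head hi, x, y, e1, e2, ?_, P.wf.tail_mem hi P.hi_mem,
    P.wf.head_mem hi P.hi_mem, hax.1, hby.1, ?_, P.hi_mem, P.he_mem, he1E, he2E, P.dir_hi, rfl,
    rfl, P.dir_he, P.tail_he, P.head_he, hd1, ht1.trans hpbu, hh1, hd2, ht2, hh2, hx, hy, ?_⟩
  · simp [huv, (P.ne_tail_of_lbl hx).symm, (P.ne_tail_of_lbl hy).symm,
      (P.ne_head_of_lbl hx).symm, (P.ne_head_of_lbl hy).symm, hxy]
  · have h1i : e1 ≠ hi := fun h => he1v (by rw [h])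
    have h1e : e1 ≠ he := fun h => he1v (by rw [h, P.head_he])
    have h2i : e2 ≠ hi := fun h => huv (h ▸ ht2)
    have h2e : e2 ≠ he := fun h => huv (P.tail_he ▸ h ▸ ht2)
    have h12 : e1 ≠ e2 := fun h => hxy (hh2.symm.trans (h ▸ hh1))
    simp [P.ne, h1i.symm, h1e.symm, h2i.symm, h2e.symm, h12]
  · intro e heE hor
    have : e ∈ M.incE (M.tail hi) ∪ M.incE (M.head hi) ∪ M.incE x ∪ M.incE y := by
      simp only [Finset.mem_union, mem_incE]
      tauto
    rw [hincu, hv, hincx, hincy, ← he2v] at this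
    simp only [Finset.mem_union, Finset.mem_insert, Finset.mem_singleton] at this
    tauto

lemma suppress_suppressIf (P : M.ParallelPair hi he) {pa pb e1 e2 h₀ : ℕ}
    (hpbu : pb ≠ M.tail hi) (hpbv : pb ≠ M.head hi) (hpau : pa ≠ M.tail hi)
    (hpav : pa ≠ M.head hi) (hpab : pa ≠ pb)
    (he1E : e1 ∈ M.E) (hd1 : M.dir e1 = true) (ht1 : M.tail e1 = pb)
    (hy : (M.lbl (M.head e1)).isSome)
    (he2E : e2 ∈ M.E) (hd2 : M.dir e2 = true) (ht2 : M.tail e2 = pa)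
    (hx : (M.lbl (M.head e2)).isSome)
    (h₀E : h₀ ∈ M.E) (hd₀ : M.dir h₀ = true) (hh₀ : M.head h₀ = pa) :
    ((M.suppressIf pb).suppress pa).ParallelPair hi he := by
  by_cases ht₀ : M.tail h₀ = pb
  · have he1h₀ : e1 ≠ h₀ := by
      rintro rfl
      rw [hh₀, ← ht2, P.wf.lbl_tail_eq_none he2E] at hy
      exact absurd hy (by simp)
    have hS := not_suppressible_of_out_edges P.wf.tail_ne_head
      (ht1 ▸ P.wf.tail_mem e1 he1E) he1h₀ he1E hd1 ht1 h₀E hd₀ ht₀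
    rw [Net.suppressIf, if_neg hS]
    exact P.suppress_of_in_out hpau hpav he2E hd2 ht2 hx h₀E hh₀
  · have hpb : M.lbl pb = none := ht1 ▸ P.wf.lbl_tail_eq_none he1E
    have he2 : e2 ∉ M.incE pb := by
      rw [mem_incE, ht2]
      rintro ⟨-, h | h⟩
      · exact hpab h
      · simp [h, hpb] at hx
    have h₀pb : h₀ ∉ M.incE pb := by
      rw [mem_incE, hh₀]
      rintro ⟨-, h | h⟩
      exacts [ht₀ h, hpab h]
    obtain ⟨he2E', hd2', ht2', hh2'⟩ := M.suppressIf_of_notMem_incE he2E he2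
    obtain ⟨h₀E', -, -, hh₀'⟩ := M.suppressIf_of_notMem_incE h₀E h₀pb
    obtain ⟨-, -, htu, -⟩ := M.suppressIf_of_notMem_incE P.hi_mem (P.notMem_incE hpbu hpbv).1
    obtain ⟨-, -, -, hhv⟩ := M.suppressIf_of_notMem_incE P.hi_mem (P.notMem_incE hpbu hpbv).1
    refine (P.suppressIf hpbu hpbv he1E hd1 ht1 hy).suppress_of_in_out (eL := e2) (h₀ := h₀)
      (htu ▸ hpau) (hhv ▸ hpav) he2E' (hd2' ▸ hd2) (ht2' ▸ ht2) ?_ h₀E' (hh₀' ▸ hh₀)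
    rw [lbl_suppressIf, hh2']
    exact hx

lemma reduceRet (P : M.ParallelPair hi he) {a b : Fin n} {x y pa pb : ℕ}
    (hax : M.HasLeaf a x) (hby : M.HasLeaf b y) (hpax : M.IsParentOf pa x)
    (hpa : M.IsHybrid pa) (hpby : M.IsParentOf pb y) (hpbpa : M.IsParentOf pb pa)
    (hpav : pa ≠ M.head hi) : (M.reduceRet a b).ParallelPair hi he := by
  obtain ⟨e2, he2E, hd2, ht2, hh2⟩ := hpax
  obtain ⟨e1, he1E, hd1, ht1, hh1⟩ := hpby
  obtain ⟨e0, he0E, hd0, ht0, hh0⟩ := hpbpa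
  have hx : (M.lbl x).isSome := by simp [hax.2]
  have hy : (M.lbl y).isSome := by simp [hby.2]
  have hpa' : M.lbl pa = none := ht2 ▸ P.wf.lbl_tail_eq_none he2E
  have hpab : pa ≠ pb := fun h => P.wf.tail_ne_head e0 he0E (ht0.trans (hh0.trans h).symm)
  have he10 : e1 ≠ e0 := fun h => by rw [← hh0, ← h, hh1] at hpa'; simp [hpa'] at hy
  obtain ⟨hpbu, hpbv⟩ := P.ne_of_out_edges he1E ht1 he0E ht0 (hh1 ▸ P.ne_head_of_lbl hy)
    (hh0 ▸ hpav) he10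
  simp only [Net.reduceRet]
  rw [P.wf.labelNode_eq hax, P.wf.labelNode_eq hby, P.wf.parentOf_eq hx he2E hd2 hh2,
    P.wf.parentOf_eq hy he1E hd1 hh1, ht1, ht2]
  set eint := ((M.E.filter fun e => M.dir e = true ∧ M.tail e = pb ∧ M.head e = pa).sort
    (· ≤ ·)).headI
  obtain ⟨heintE, -, hteint, hheint⟩ := Finset.mem_filter.mp
    (headI_sort_mem ⟨e0, Finset.mem_filter.mpr ⟨he0E, hd0, ht0, hh0⟩⟩ : eint ∈ _)
  have P₁ := P.eraseEdge (e := eint) fun h => by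
    rcases (mem_incE.mp h).2 with h | h
    exacts [hpbv (hteint ▸ h), hpav (hheint ▸ h)]
  obtain ⟨h₀, h₀E, hd₀, hh₀, h₀int⟩ := hpa.exists_inEdge_ne eint
  have hne_eint : ∀ e, M.head e ≠ pa → e ≠ eint := fun e h h' => h (h' ▸ hheint)
  have he1 : e1 ≠ eint := hne_eint e1 (hh1 ▸ fun h => by simp [h, hpa'] at hy)
  have he2 : e2 ≠ eint := hne_eint e2 (hh2 ▸ fun h => by simp [h, hpa'] at hx)
  exact P₁.suppress_suppressIf hpbu hpbv (P.ne_tail_of_isHybrid hpa) hpav hpab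
    (Finset.mem_erase.mpr ⟨he1, he1E⟩) hd1 ht1 (hh1 ▸ hy)
    (Finset.mem_erase.mpr ⟨he2, he2E⟩) hd2 ht2 (hh2 ▸ hx)
    (Finset.mem_erase.mpr ⟨h₀int, h₀E⟩) hd₀ hh₀

lemma of_good (hG : M.Good) (hne : hi ≠ he) (hiE : hi ∈ M.E) (heE : he ∈ M.E)
    (hsame : M.tail hi = M.tail he ∧ M.head hi = M.head he) : M.ParallelPair hi he := by
  have hac := hG.1.acyclic
  have hdi := hac.dir_eq_true_of_parallel hne.symm heE hiE hsame.1.symm hsame.2.symm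
  have hde := hac.dir_eq_true_of_parallel hne hiE heE hsame.1 hsame.2
  refine ⟨hG.1.wellFormed, hne, hiE, heE, hdi, hde, hsame.1.symm, hsame.2.symm, ?_,
    hG.incE_head_eq hne hiE heE hdi hde hsame.2.symm⟩
  rw [card_incE_eq_deg hac.tail_ne_head]
  exact hG.2.1.deg_le_three (hG.1.wfT hi hiE)

lemma reduceCherry (P : M.ParallelPair hi he) {a b : Fin n} (hC : M.IsCherry a b) :
    M.HasN2Component hi he ∨ (M.reduceCherry a b).ParallelPair hi he := by
  by_cases hT : M.TreeCherry a b
  · rw [Net.reduceCherry, if_pos hT]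
    exact Or.inr (P.reduceTree hT)
  have hR := hC.resolve_left hT
  obtain ⟨x, y, pa, pb, hax, hby, hxy, hpax, hpa, hpby, hpbpa⟩ := hR
  by_cases hpav : pa = M.head hi
  · exact Or.inl (P.hasN2Component_of_parent_eq_head hax hby hxy hpax hpby hpbpa hpav)
  · rw [Net.reduceCherry, if_neg hT, if_pos (hC.resolve_left hT)]
    exact Or.inr (P.reduceRet hax hby hpax hpa hpby hpbpa hpav)

lemma exists_hasN2Component : ∀ (S : List (Fin n × Fin n)) {M : Net n}, M.ParallelPair hi he →
    M.IsRedSeq S → hi ∉ (M.reduceSeq S).E →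
    ∃ i < S.length, (M.reduceSeq (S.take i)).HasN2Component hi he
  | [], _, P, _, hE => absurd P.hi_mem hE
  | s :: S, _, P, hS, hE => by
    rcases P.reduceCherry hS.1 with h | P'
    · exact ⟨0, by simp, h⟩
    · obtain ⟨i, hlt, h⟩ := exists_hasN2Component S P' hS.2 hE
      exact ⟨i + 1, by simpa using hlt, h⟩

end ParallelPair

end Net

/-- Prop. 4, part 1: any complete reduction sequence of an
orchard network with parallel edges `h_i, h_e` passes through a stage whose reduced
network contains the network `N_2` (a root with two parallel edges to a hybrid,
each with a pendant leaf) as a connected component containing `h_i` and `h_e`. -/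
theorem stmt10 {n : ℕ} (N : Net n) (hN : N.Good)
    (hi he : ℕ) (hne : hi ≠ he) (hiE : hi ∈ N.E) (heE : he ∈ N.E)
    (hsame : N.tail hi = N.tail he ∧ N.head hi = N.head he)
    (S : List (Fin n × Fin n)) (hS : N.IsRedSeq S)
    (L0 : Finset (Fin n)) (hcomp : (N.reduceSeq S).IsTrivialForest L0) :
    ∃ i < S.length,
      let M := N.reduceSeq (S.take i)
      ∃ u v x y e1 e2 : ℕ,
        ([u, v, x, y] : List ℕ).Nodup ∧
        u ∈ M.V ∧ v ∈ M.V ∧ x ∈ M.V ∧ y ∈ M.V ∧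
        ([hi, he, e1, e2] : List ℕ).Nodup ∧
        hi ∈ M.E ∧ he ∈ M.E ∧ e1 ∈ M.E ∧ e2 ∈ M.E ∧
        M.dir hi = true ∧ M.tail hi = u ∧ M.head hi = v ∧
        M.dir he = true ∧ M.tail he = u ∧ M.head he = v ∧
        M.dir e1 = true ∧ M.tail e1 = u ∧ M.head e1 = y ∧
        M.dir e2 = true ∧ M.tail e2 = v ∧ M.head e2 = x ∧
        (M.lbl x).isSome ∧ (M.lbl y).isSome ∧
        (∀ e ∈ M.E,
          (M.tail e = u ∨ M.tail e = v ∨ M.tail e = x ∨ M.tail e = y ∨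
            M.head e = u ∨ M.head e = v ∨ M.head e = x ∨ M.head e = y) →
          e = hi ∨ e = he ∨ e = e1 ∨ e = e2) :=
  (Net.ParallelPair.of_good hN hne hiE heE hsame).exists_hasN2Component S hS
    (by simp [hcomp.1])

end
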